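/- arXiv:1912.00710 — 4 statements merged into one kernel-verified Lean document; each statement's English description precedes it below -/
import Mathlib

section
/- Let S be a finite set of n elements and let <₁, …, <_ℓ be ℓ total (linear) orderings on S. Then there exists a subset S' ⊆ S of size at least n^(1/2^(ℓ−1)) and an enumeration S' = {s_1, s_2, …, s_t} such that, in this enumeration, S' forms an increasing chain in <₁ and, for every i ∈ {2, …, ℓ}, S' forms either an increasing chain or a decreasing chain in <_i. -/
/-!
Induct on the number of orders. Each further order is handled by the Erdős–Szekeres theorem,
which keeps a subset of at least the square root of the size on which that order agrees with the
first one or with its reverse; `ℓ - 1` square roots give the exponent `1 / 2 ^ (ℓ - 1)`. The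
surviving subset is then enumerated increasingly in the first order.
-/

open Finset

variable {α : Type*}

namespace Finset

theorem exists_minimal_of_isStrictOrder (r : α → α → Prop) [IsStrictOrder α r] {s : Finset α}
    (hs : s.Nonempty) : ∃ m ∈ s, ∀ x ∈ s, ¬ r x m := by
  obtain ⟨m, hm, hmin⟩ :=
    (Set.wellFoundedOn_iff.1 (s.finite_toSet.wellFoundedOn (r := r))).has_min (s : Set α) hs
  exact ⟨m, hm, fun x hx hxm => hmin x hx ⟨hxm, hx, hm⟩⟩

theorem exists_minimal_rel_of_rel (r : α → α → Prop) [IsStrictOrder α r] {P : Finset α} {y c : α}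
    (hy : y ∈ P) (hyc : r y c) : ∃ m ∈ P, (∀ z ∈ P, ¬ r z m) ∧ r m c := by
  classical
  obtain ⟨m, hm, hmin⟩ :=
    (P.filter (r · c)).exists_minimal_of_isStrictOrder r ⟨y, mem_filter.2 ⟨hy, hyc⟩⟩
  rw [mem_filter] at hm
  exact ⟨m, hm.1, fun z hz hzm => hmin z (mem_filter.2 ⟨hz, _root_.trans hzm hm.2⟩) hzm, hm.2⟩

/-- A weak form of Mirsky's theorem: the minimal elements form an antichain, and removing them
shortens every chain. -/
theorem card_le_mul_of_isChain_of_isAntichain (r : α → α → Prop) [IsStrictOrder α r]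
    (P : Finset α) (k w : ℕ) (hchain : ∀ C ⊆ P, IsChain r (C : Set α) → #C ≤ k)
    (hanti : ∀ A ⊆ P, IsAntichain r (A : Set α) → #A ≤ w) : #P ≤ k * w := by
  classical
  induction k generalizing P with
  | zero =>
    rw [zero_mul, Nat.le_zero, card_eq_zero, eq_empty_iff_forall_notMem]
    intro x hx
    simpa using hchain {x} (by simpa using hx) (by simp)
  | succ k ih =>
    set A := P.filter fun x => ∀ y ∈ P, ¬ r y x
    have hA : #A ≤ w := hanti A (filter_subset _ _) fun x hx y hy _ hxy =>
      (mem_filter.1 hy).2 x (mem_filter.1 hx).1 hxy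
    have hrest : #(P \ A) ≤ k * w := by
      refine ih _ (fun C hC hCchain => ?_) fun B hB => hanti B (hB.trans sdiff_subset)
      rcases C.eq_empty_or_nonempty with rfl | hCne
      · simp
      obtain ⟨c, hc, hcmin⟩ := C.exists_minimal_of_isStrictOrder r hCne
      have hcP : c ∈ P := (mem_sdiff.1 (hC hc)).1
      obtain ⟨y, hyP, hyc⟩ : ∃ y ∈ P, r y c := by
        by_contra! h
        exact (mem_sdiff.1 (hC hc)).2 (mem_filter.2 ⟨hcP, h⟩)
      obtain ⟨m, hmP, hmmin, hmc⟩ := exists_minimal_rel_of_rel r hyP hyc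
      have hmA : m ∈ A := mem_filter.2 ⟨hmP, hmmin⟩
      have hmC : m ∉ C := fun h => (mem_sdiff.1 (hC h)).2 hmA
      have hm_below : ∀ x ∈ C, r m x := fun x hx => by
        rcases eq_or_ne x c with rfl | hxc
        · exact hmc
        · exact _root_.trans hmc ((hCchain hc hx hxc.symm).resolve_right (hcmin x hx))
      have hlonger := hchain (insert m C) (insert_subset hmP (hC.trans sdiff_subset)) <| by
        rw [coe_insert]
        exact hCchain.insert fun x hx _ => Or.inl (hm_below x hx)
      rw [card_insert_of_notMem hmC] at hlonger
      omega
    rw [← card_sdiff_add_card_eq_card (filter_subset _ P : A ⊆ P), add_one_mul]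
    exact add_le_add hrest hA

theorem exists_isChain_isAntichain_card_le_mul (r : α → α → Prop) [IsStrictOrder α r]
    (P : Finset α) : ∃ C ⊆ P, IsChain r (C : Set α) ∧ ∃ A ⊆ P, IsAntichain r (A : Set α) ∧
      #P ≤ #C * #A := by
  classical
  obtain ⟨C, hC, hCmax⟩ := (P.powerset.filter fun C : Finset α => IsChain r (C : Set α))
    |>.exists_max_image card ⟨∅, by simp⟩
  obtain ⟨A, hA, hAmax⟩ := (P.powerset.filter fun A : Finset α => IsAntichain r (A : Set α))
    |>.exists_max_image card ⟨∅, by simp⟩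
  simp only [mem_filter, mem_powerset] at hC hA hCmax hAmax
  exact ⟨C, hC.1, hC.2, A, hA.1, hA.2, P.card_le_mul_of_isChain_of_isAntichain r _ _
    (fun D hD hDc => hCmax D ⟨hD, hDc⟩) fun B hB hBa => hAmax B ⟨hB, hBa⟩⟩

end Finset

/-- `r` agrees with `r₀` on `U`; for strict total orders this means they coincide there. -/
def AgreeOn (r₀ r : α → α → Prop) (U : Finset α) : Prop :=
  ∀ x ∈ U, ∀ y ∈ U, r₀ x y → r x y

theorem AgreeOn.mono {r₀ r : α → α → Prop} {U V : Finset α} (h : AgreeOn r₀ r U) (hVU : V ⊆ U) :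
    AgreeOn r₀ r V :=
  fun x hx y hy => h x (hVU hx) y (hVU hy)

instance isStrictOrder_and (r₀ r : α → α → Prop) [IsStrictOrder α r₀] [IsTrans α r] :
    IsStrictOrder α fun x y => r₀ x y ∧ r x y where
  irrefl x h := irrefl x h.1
  trans _ _ _ h h' := ⟨_root_.trans h.1 h'.1, _root_.trans h.2 h'.2⟩

theorem IsChain.agreeOn {r₀ r : α → α → Prop} [Std.Asymm r₀] {U : Finset α}
    (hU : IsChain (fun x y => r₀ x y ∧ r x y) (U : Set α)) : AgreeOn r₀ r U :=
  fun _ hx _ hy hxy =>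
    ((hU hx hy (ne_of_irrefl hxy)).resolve_right fun h => asymm hxy h.1).2

theorem IsAntichain.agreeOn_flip {r₀ r : α → α → Prop} [Std.Irrefl r₀] [Std.Trichotomous r]
    {U : Finset α} (hU : IsAntichain (fun x y => r₀ x y ∧ r x y) (U : Set α)) :
    AgreeOn r₀ (flip r) U := fun x hx y hy hxy =>
  ((trichotomous_of r x y).resolve_left fun h => hU hx hy (ne_of_irrefl hxy) ⟨hxy, h⟩).resolve_left
    (ne_of_irrefl hxy)

/-- Erdős–Szekeres, via Mirsky's bound for the intersection of the two orders. -/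
theorem exists_agreeOn_or_agreeOn_flip (r₀ r : α → α → Prop) [IsStrictOrder α r₀]
    [IsStrictTotalOrder α r] (T : Finset α) :
    ∃ U ⊆ T, #T ≤ #U ^ 2 ∧ (AgreeOn r₀ r U ∨ AgreeOn r₀ (flip r) U) := by
  obtain ⟨C, hCT, hC, A, hAT, hA, hcard⟩ :=
    T.exists_isChain_isAntichain_card_le_mul fun x y => r₀ x y ∧ r x y
  rcases le_total #C #A with hCA | hAC
  · exact ⟨A, hAT, hcard.trans (by nlinarith), Or.inr hA.agreeOn_flip⟩
  · exact ⟨C, hCT, hcard.trans (by nlinarith), Or.inl hC.agreeOn⟩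

theorem exists_forall_agreeOn_or_agreeOn_flip (r₀ : α → α → Prop) [IsStrictOrder α r₀] {n : ℕ}
    (r : Fin n → α → α → Prop) (hr : ∀ i, IsStrictTotalOrder α (r i)) (T : Finset α) :
    ∃ U ⊆ T, #T ≤ #U ^ 2 ^ n ∧ ∀ i, AgreeOn r₀ (r i) U ∨ AgreeOn r₀ (flip (r i)) U := by
  induction n generalizing T with
  | zero => exact ⟨T, subset_rfl, by simp, fun i => i.elim0⟩
  | succ n ih =>
    obtain ⟨U, hUT, hTU, hU⟩ := exists_agreeOn_or_agreeOn_flip r₀ (r 0) T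
    obtain ⟨V, hVU, hUV, hV⟩ := ih (Fin.tail r) (fun i => hr i.succ) U
    refine ⟨V, hVU.trans hUT, ?_, Fin.cases (hU.imp (·.mono hVU) (·.mono hVU)) hV⟩
    calc #T ≤ #U ^ 2 := hTU
      _ ≤ (#V ^ 2 ^ n) ^ 2 := Nat.pow_le_pow_left hUV 2
      _ = #V ^ 2 ^ (n + 1) := by rw [← pow_mul, pow_succ]

theorem Finset.exists_increasing_enumeration (r : α → α → Prop) [IsStrictTotalOrder α r]
    (U : Finset α) : ∃ s : Fin #U → α, Function.Injective s ∧ (∀ i, s i ∈ U) ∧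
      ∀ i j, i < j → r (s i) (s j) := by
  classical
  let := linearOrderOfSTO r
  exact ⟨U.orderEmbOfFin rfl, (U.orderEmbOfFin rfl).injective, U.orderEmbOfFin_mem rfl,
    fun _ _ h => (U.orderEmbOfFin rfl).strictMono h⟩

theorem Real.rpow_one_div_two_pow_le {x y : ℝ} (hx : 0 ≤ x) (hy : 0 ≤ y) {k : ℕ}
    (h : x ≤ y ^ 2 ^ k) : x ^ ((1 : ℝ) / 2 ^ k) ≤ y := by
  rw [one_div, Real.rpow_inv_le_iff_of_pos hx hy (by positivity)]
  exact_mod_cast h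

/-- Erdős–Szekeres for several orders: given `ℓ` strict total orders on a finite set `S` of
`n` elements, there is a subset of size at least `n^(1/2^(ℓ-1))` that can be enumerated so as
to form an increasing chain in the first order and an increasing or decreasing chain in each
of the other orders. -/
theorem erdos_szekeres_multi_order {α : Type} (S : Finset α) (ℓ : ℕ) (hℓ : 0 < ℓ)
    (r : Fin ℓ → S → S → Prop) (hr : ∀ i, IsStrictTotalOrder S (r i)) :
    ∃ (t : ℕ) (s : Fin t → S),
      (S.card : ℝ) ^ ((1 : ℝ) / 2 ^ (ℓ - 1)) ≤ (t : ℝ) ∧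
      Function.Injective s ∧
      (∀ i j : Fin t, i < j → r ⟨0, hℓ⟩ (s i) (s j)) ∧
      (∀ m : Fin ℓ,
        (∀ i j : Fin t, i < j → r m (s i) (s j)) ∨
        (∀ i j : Fin t, i < j → r m (s j) (s i))) := by
  obtain ⟨ℓ, rfl⟩ := Nat.exists_eq_succ_of_ne_zero hℓ.ne'
  obtain ⟨U, -, hcard, hU⟩ :=
    exists_forall_agreeOn_or_agreeOn_flip (r 0) (Fin.tail r) (fun i => hr i.succ) univ
  obtain ⟨s, hs_inj, hsU, hs⟩ := U.exists_increasing_enumeration (r 0)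
  have hagree {m} (h : AgreeOn (r 0) m U) (i j : Fin #U) (hij : i < j) : m (s i) (s j) :=
    h _ (hsU i) _ (hsU j) (hs i j hij)
  refine ⟨#U, s, Real.rpow_one_div_two_pow_le (by positivity) (by positivity) ?_, hs_inj, hs,
    Fin.cases (Or.inl hs) fun m => (hU m).imp hagree hagree⟩
  rw [card_univ, Fintype.card_coe] at hcard
  exact_mod_cast hcard
end

section
/- Let k ≥ 2 and ℓ ≥ k be integers and let T be a tournament whose vertex set is the disjoint union of sets W_1, …, W_k with |W_i| = 12·k^22·ℓ² for each i ∈ [k]. Suppose B ⊆ W_1 is a set of size ℓ that is contained in a (4, m, kℓ)-nearly-regular subset of T (for some integer m) on which every vertex satisfies d⁻(v) ≤ d⁺(v) ≤ 4·d⁻(v), and suppose no T₂K⃗_ℓ sits on B. Then there is a partition [k] = I ∪ J with |I| ≥ k/10 and |J| ≥ k/10, and subsets W'_i ⊆ W_i with |W'_i| ≥ |W_i|/10 for each i ∈ [k], such that every edge of T between ⋃_{i∈I} W'_i and ⋃_{j∈J} W'_j is directed from ⋃_{i∈I} W'_i to ⋃_{j∈J} W'_j. -/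
/-!
Embed the paths of a `T₂K⃗_ℓ` on `B` greedily: the path for a new ordered pair only has to avoid
`B` and the at most `2ℓ²` interior vertices used so far. As no copy sits on `B`, some pair
`a ≠ b` in `B` has no path of length at most `3` from `a` to `b` whose interior avoids a set
`U ⊇ B` with `|U| ≤ 3ℓ²`. Let `X` be the out-neighbours of `a` and `Y` the in-neighbours of `b`
outside `U`. Then `X` and `Y` are disjoint, and every edge between them goes from `Y` to `X`,
since an edge `x → y` would give the path `a → x → y → b`. Near-regularity gives
`|X| ≳ n/2`, `|Y| ≳ n/5` and `|X| + |Y| ≥ n - O(ℓ²)`, so every part `W_i` is at least a tenth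
`X` or a tenth `Y`, and by counting at least `k/10` parts are of each kind. Taking for `I` parts
rich in `Y` and for `J` parts rich in `X` gives the split, with `W'_i = Y ∩ W_i` for `i ∈ I` and
`W'_j = X ∩ W_j` for `j ∈ J`.
-/

/-- A tournament: a loopless digraph on a finite vertex set in which, for every pair of
distinct vertices `x, y`, exactly one of the edges `(x,y)`, `(y,x)` is present. -/
def IsTournament {V : Type} (G : V → V → Prop) : Prop :=
  (∀ v, ¬ G v v) ∧ ∀ x y : V, x ≠ y → (G x y ↔ ¬ G y x)

/-- The interior of a path, i.e. the path with its first and last vertices removed. -/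
def listInterior {V : Type} (p : List V) : List V := p.tail.dropLast

/-- `IsT2K G ℓ B P` says that the branch set `B` together with the paths `P a b` (for ordered
pairs of distinct `a, b ∈ B`) forms a copy of `T₂K⃗_ℓ` in `G`: `B` has `ℓ` vertices; for each
ordered pair `(a, b)` of distinct branch vertices, `P a b` is a directed path from `a` to `b`
of length at most `3` (at most `4` vertices) whose interior avoids `B`; and the paths are
pairwise internally vertex-disjoint. -/
def IsT2K {V : Type} (G : V → V → Prop) (ℓ : ℕ) (B : Finset V) (P : V → V → List V) : Prop :=
  B.card = ℓ ∧
  (∀ a ∈ B, ∀ b ∈ B, a ≠ b →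
    (P a b).Nodup ∧ (P a b).Chain' G ∧ (P a b).head? = some a ∧
    (P a b).getLast? = some b ∧ (P a b).length ≤ 4 ∧
    ∀ v ∈ listInterior (P a b), v ∉ B) ∧
  (∀ a ∈ B, ∀ b ∈ B, ∀ c ∈ B, ∀ d ∈ B, a ≠ b → c ≠ d → (a, b) ≠ (c, d) →
    ∀ v ∈ listInterior (P a b), v ∉ listInterior (P c d))

/-- A copy of `T₂K⃗_ℓ` sits on a vertex set `X` if its branch vertex set is a subset of `X`.
`SitsOn G ℓ X` says that some copy of `T₂K⃗_ℓ` in `G` sits on `X`. -/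
def SitsOn {V : Type} (G : V → V → Prop) (ℓ : ℕ) (X : Finset V) : Prop :=
  ∃ (B : Finset V) (P : V → V → List V), IsT2K G ℓ B P ∧ B ⊆ X

/-- The vertex set of a copy of `T₂K⃗_ℓ` given by branch set `B` and paths `P`. -/
def copyVerts {V : Type} (B : Finset V) (P : V → V → List V) : Set V :=
  {v | v ∈ B ∨ ∃ a ∈ B, ∃ b ∈ B, a ≠ b ∧ v ∈ P a b}

/-- The out-degree of a vertex. -/
noncomputable def outDeg {V : Type} (G : V → V → Prop) (v : V) : ℕ := {u | G v u}.ncard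

/-- The in-degree of a vertex. -/
noncomputable def inDeg {V : Type} (G : V → V → Prop) (v : V) : ℕ := {u | G u v}.ncard

open Finset Function

def IsShortPath {V : Type} (G : V → V → Prop) (U : Finset V) (a b : V) (p : List V) : Prop :=
  p.Nodup ∧ p.IsChain G ∧ p.head? = some a ∧ p.getLast? = some b ∧ p.length ≤ 4 ∧
    ∀ v ∈ listInterior p, v ∉ U

variable {V : Type} {G : V → V → Prop}

lemma IsShortPath.mono {U U' : Finset V} {a b : V} {p : List V} (hU : U ⊆ U')
    (h : IsShortPath G U' a b p) : IsShortPath G U a b p :=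
  ⟨h.1, h.2.1, h.2.2.1, h.2.2.2.1, h.2.2.2.2.1, fun v hv hvU => h.2.2.2.2.2 v hv (hU hvU)⟩

lemma length_listInterior (p : List V) : (listInterior p).length = p.length - 2 := by
  simp only [listInterior, List.length_dropLast, List.length_tail]
  omega

lemma isShortPath_of_adj_adj {U : Finset V} {a v b : V} (hab : a ≠ b) (haU : a ∈ U)
    (hbU : b ∈ U) (hvU : v ∉ U) (hav : G a v) (hvb : G v b) : IsShortPath G U a b [a, v, b] := by
  have hva : v ≠ a := fun h => hvU (h ▸ haU)
  have hvb' : v ≠ b := fun h => hvU (h ▸ hbU)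
  refine ⟨by simp [hab, hva.symm, hvb'], by simp [List.isChain_cons_cons, hav, hvb], rfl, rfl,
    by simp, ?_⟩
  simpa [listInterior] using hvU

lemma isShortPath_of_adj_adj_adj {U : Finset V} {a u v b : V} (hab : a ≠ b) (haU : a ∈ U)
    (hbU : b ∈ U) (huU : u ∉ U) (hvU : v ∉ U) (huv : u ≠ v) (hau : G a u) (huv' : G u v)
    (hvb : G v b) : IsShortPath G U a b [a, u, v, b] := by
  have hua : u ≠ a := fun h => huU (h ▸ haU)
  have hub : u ≠ b := fun h => huU (h ▸ hbU)
  have hva : v ≠ a := fun h => hvU (h ▸ haU)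
  have hvb' : v ≠ b := fun h => hvU (h ▸ hbU)
  refine ⟨by simp [hab, hua.symm, huv, hub, hva.symm, hvb'],
    by simp [List.isChain_cons_cons, hau, huv', hvb], rfl, rfl, by simp, ?_⟩
  simpa [listInterior] using ⟨huU, hvU⟩

lemma exists_pairwise_disjoint_isShortPath [DecidableEq V] (B : Finset V)
    (S : Finset (V × V))
    (h : ∀ q ∈ S, ∀ U : Finset V, B ⊆ U → #U ≤ #B + 2 * #S → ∃ p, IsShortPath G U q.1 q.2 p) :
    ∃ P : V × V → List V, (∀ q ∈ S, IsShortPath G B q.1 q.2 (P q)) ∧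
      (S : Set (V × V)).Pairwise
        (fun q r => ∀ v ∈ listInterior (P q), v ∉ listInterior (P r)) ∧
      #(S.biUnion fun q => (listInterior (P q)).toFinset) ≤ 2 * #S := by
  induction S using Finset.induction_on with
  | empty => exact ⟨fun _ => [], by simp, by simp, by simp⟩
  | @insert q S hq ih =>
    rw [card_insert_of_notMem hq] at h ⊢
    obtain ⟨P, hP, hdisj, hcard⟩ := ih fun r hr U hBU hU =>
      h r (mem_insert_of_mem hr) U hBU (by omega)
    set T := S.biUnion fun r => (listInterior (P r)).toFinset
    obtain ⟨p, hp⟩ := h q (mem_insert_self q S) (B ∪ T) subset_union_left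
      (by linarith [card_union_le B T])
    have hT : ∀ r ∈ S, ∀ v ∈ listInterior (P r), v ∈ T := fun r hr v hv =>
      mem_biUnion.2 ⟨r, hr, List.mem_toFinset.2 hv⟩
    have hpT : ∀ v ∈ listInterior p, v ∉ T := fun v hv hvT =>
      hp.2.2.2.2.2 v hv (mem_union_right B hvT)
    have hupd : ∀ r ∈ S, update P q p r = P r := fun r hr =>
      update_of_ne (ne_of_mem_of_not_mem hr hq) _ _
    refine ⟨update P q p, ?_, ?_, ?_⟩
    · intro r hr
      rcases mem_insert.1 hr with rfl | hr
      · simpa using hp.mono subset_union_left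
      · rw [hupd r hr]
        exact hP r hr
    · rw [coe_insert, Set.pairwise_insert]
      refine ⟨fun r hr s hs hrs => ?_, fun r hr _ => ?_⟩
      · simp only [hupd r hr, hupd s hs]
        exact hdisj hr hs hrs
      · rw [update_self, hupd r hr]
        exact ⟨fun v hv hvr => hpT v hv (hT r hr v hvr),
          fun v hv hvp => hpT v hvp (hT r hr v hv)⟩
    · have hS : (S.biUnion fun r => (listInterior (update P q p r)).toFinset) = T :=
        biUnion_congr rfl fun r hr => by rw [hupd r hr]
      have hp2 : #(listInterior p).toFinset ≤ 2 :=
        (List.toFinset_card_le _).trans (by rw [length_listInterior]; have := hp.2.2.2.2.1; omega)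
      rw [biUnion_insert, hS, update_self]
      linarith [card_union_le (listInterior p).toFinset T]

lemma exists_isT2K_of_forall_isShortPath (B : Finset V)
    (h : ∀ a ∈ B, ∀ b ∈ B, a ≠ b → ∀ U : Finset V, B ⊆ U → #U ≤ 3 * #B ^ 2 →
      ∃ p, IsShortPath G U a b p) :
    ∃ P, IsT2K G #B B P := by
  classical
  obtain ⟨P, hP, hdisj, -⟩ := exists_pairwise_disjoint_isShortPath (G := G) B B.offDiag
    fun q hq U hBU hU => by
      obtain ⟨ha, hb, hab⟩ := mem_offDiag.1 hq
      refine h _ ha _ hb hab U hBU ?_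
      rw [offDiag_card] at hU
      have : #B ≤ #B * #B := Nat.le_mul_self _
      nlinarith [Nat.sub_le (#B * #B) #B]
  exact ⟨fun a b => P (a, b), rfl, fun a ha b hb hab => hP _ (mem_offDiag.2 ⟨ha, hb, hab⟩),
    fun a ha b hb c hc d hd hab hcd hne =>
      hdisj (mem_offDiag.2 ⟨ha, hb, hab⟩) (mem_offDiag.2 ⟨hc, hd, hcd⟩) hne⟩

lemma exists_not_isShortPath_of_not_sitsOn {ℓ : ℕ} {B : Finset V} (hB : #B = ℓ)
    (h : ¬ SitsOn G ℓ B) :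
    ∃ a ∈ B, ∃ b ∈ B, a ≠ b ∧ ∃ U : Finset V, B ⊆ U ∧ #U ≤ 3 * ℓ ^ 2 ∧
      ∀ p, ¬ IsShortPath G U a b p := by
  by_contra! hcon
  obtain ⟨P, hP⟩ := exists_isT2K_of_forall_isShortPath B (hB ▸ hcon)
  exact h ⟨B, P, hB ▸ hP, subset_rfl⟩

namespace IsTournament

lemma adj_of_not_adj (hT : IsTournament G) {u v : V} (huv : u ≠ v) (h : ¬ G u v) : G v u :=
  (hT.2 v u huv.symm).2 h

lemma outDeg_add_inDeg [Fintype V] (hT : IsTournament G) (v : V) :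
    outDeg G v + inDeg G v + 1 = Fintype.card V := by
  have hdisj : Disjoint {u | G v u} {u | G u v} :=
    Set.disjoint_left.2 fun u hvu huv => (hT.2 v u fun h => hT.1 v (h ▸ hvu)).1 hvu huv
  have hunion : {u | G v u} ∪ {u | G u v} = {v}ᶜ := by
    ext u
    by_cases huv : u = v
    · subst huv
      simp [hT.1 u]
    · simp only [Set.mem_union, Set.mem_ofPred_eq, Set.mem_compl_iff, Set.mem_singleton_iff, huv,
        not_false_eq_true, iff_true]
      exact or_iff_not_imp_left.2 (hT.adj_of_not_adj (Ne.symm huv))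
  have hcard := congrArg Set.ncard hunion
  rw [Set.ncard_union_eq hdisj, Set.ncard_compl, Set.ncard_singleton, Nat.card_eq_fintype_card]
    at hcard
  rw [outDeg, inDeg, hcard, Nat.sub_add_cancel (Fintype.card_pos_iff.2 ⟨v⟩)]

lemma exists_dominating_pair [Fintype V] (hT : IsTournament G) {a b : V} {U : Finset V}
    (hab : a ≠ b) (haU : a ∈ U) (hbU : b ∈ U) (hU : ∀ p, ¬ IsShortPath G U a b p) :
    ∃ X Y : Finset V, Disjoint X Y ∧ (∀ y ∈ Y, ∀ x ∈ X, G y x) ∧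
      outDeg G a ≤ #X + #U ∧ inDeg G b ≤ #Y + #U := by
  classical
  have hno : ∀ v ∉ U, G a v → ¬ G v b := fun v hv hav hvb =>
    hU _ (isShortPath_of_adj_adj hab haU hbU hv hav hvb)
  have hcard : ∀ (s : Set V) (X : Finset V), s ⊆ ↑X ∪ ↑U → s.ncard ≤ #X + #U := fun s X hs => by
    refine (Set.ncard_le_ncard hs (Set.toFinite _)).trans ?_
    rw [← coe_union, Set.ncard_coe_finset]
    exact card_union_le X U
  refine ⟨({v | G a v ∧ v ∉ U} : Finset V), ({v | G v b ∧ v ∉ U} : Finset V), ?_, ?_,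
    hcard _ _ ?_, hcard _ _ ?_⟩
  · simp only [disjoint_left, mem_filter, mem_univ, true_and]
    exact fun v hX hY => hno v hX.2 hX.1 hY.1
  · simp only [mem_filter, mem_univ, true_and]
    intro y hy x hx
    have hxy : x ≠ y := fun h => hno x hx.2 hx.1 (h ▸ hy.1)
    by_contra hyx
    exact hU _ (isShortPath_of_adj_adj_adj hab haU hbU hx.2 hy.2 hxy hx.1
      (hT.adj_of_not_adj hxy.symm hyx) hy.1)
  all_goals intro v hv; by_cases hvU : v ∈ U <;> simp_all

end IsTournament

lemma card_eq_sum_card_inter {ι : Type*} [Fintype ι] [DecidableEq V] {W : ι → Finset V}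
    (hdisj : Pairwise (Disjoint on W)) (hcover : ∀ v, ∃ i, v ∈ W i) (s : Finset V) :
    #s = ∑ i, #(s ∩ W i) := by
  rw [← card_biUnion fun i _ j _ hij => (hdisj hij).mono inter_subset_right inter_subset_right]
  congr 1
  ext v
  simpa using fun _ => hcover v

lemma le_add_of_card_mul_le_sum {ι : Type*} [Fintype ι] {f : ι → ℕ} {w e : ℕ}
    (hf : ∀ i, f i ≤ w) (h : Fintype.card ι * w ≤ ∑ i, f i + e) (i : ι) : w ≤ f i + e := by
  classical
  have hrest : ∑ j ∈ univ.erase i, f j ≤ (Fintype.card ι - 1) * w := by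
    simpa [card_erase_of_mem] using sum_le_card_nsmul (univ.erase i) f w fun j _ => hf j
  obtain ⟨c, hc⟩ : ∃ c, Fintype.card ι = c + 1 :=
    ⟨_, (Nat.sub_add_cancel (Fintype.card_pos_iff.2 ⟨i⟩)).symm⟩
  rw [← add_sum_erase univ f (mem_univ i), hc] at h
  rw [hc, Nat.add_sub_cancel] at hrest
  nlinarith

lemma le_ten_mul_card_filter {ι : Type*} [Fintype ι] {x : ι → ℕ} {w : ℕ} (hx : ∀ i, x i ≤ w)
    (h : 2 * Fintype.card ι * w < 10 * ∑ i, x i + w) :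
    Fintype.card ι ≤ 10 * #{i | w ≤ 10 * x i} := by
  classical
  set big : Finset ι := {i | w ≤ 10 * x i}
  have hbig : ∑ i ∈ big, 10 * x i ≤ #big * (10 * w) := by
    simpa using sum_le_card_nsmul big _ _ fun i _ => Nat.mul_le_mul_left 10 (hx i)
  have hsmall : ∑ i ∈ bigᶜ, 10 * x i ≤ #bigᶜ * w := by
    refine (sum_le_card_nsmul bigᶜ _ _ fun i hi => ?_).trans_eq (smul_eq_mul _ _)
    simp only [big, mem_compl, mem_filter, mem_univ, true_and] at hi
    omega
  have hcompl : #bigᶜ ≤ Fintype.card ι := card_le_univ _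
  rw [mul_sum, ← sum_add_sum_compl big] at h
  have : 2 * Fintype.card ι * w < (10 * #big + Fintype.card ι + 1) * w := by
    nlinarith [Nat.mul_le_mul_right w hcompl]
  have := Nat.lt_of_mul_lt_mul_right this
  omega

lemma exists_subset_compl_subset {ι : Type*} [Fintype ι] [DecidableEq ι] {P Q : Finset ι}
    (hPQ : Pᶜ ⊆ Q) (hι : 2 ≤ Fintype.card ι) (hP : Fintype.card ι ≤ 10 * #P)
    (hQ : Fintype.card ι ≤ 10 * #Q) :
    ∃ I ⊆ Q, Iᶜ ⊆ P ∧ Fintype.card ι ≤ 10 * #I ∧ Fintype.card ι ≤ 10 * #Iᶜ := by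
  have hPc := card_compl P
  have hQι := card_le_univ Q
  obtain ⟨I, hPI, hIQ, hI⟩ := exists_subsuperset_card_eq hPQ
    (le_max_left _ ((Fintype.card ι + 9) / 10)) (max_le (card_le_card hPQ) (by omega))
  refine ⟨I, hIQ, compl_le_iff_compl_le.1 hPI, ?_, ?_⟩ <;> rw [card_compl] at * <;> omega

theorem exists_split_of_dominating {ι : Type*} [Fintype ι] [DecidableEq ι] {W : ι → Finset V}
    (hdisj : Pairwise (Disjoint on W)) (hcover : ∀ v, ∃ i, v ∈ W i)
    {w e : ℕ} (hsize : ∀ i, #(W i) = w) (hι : 2 ≤ Fintype.card ι) {X Y : Finset V}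
    (hXY : Disjoint X Y) (hdom : ∀ y ∈ Y, ∀ x ∈ X, G y x)
    (hX : 2 * Fintype.card ι * w < 10 * #X + w) (hY : 2 * Fintype.card ι * w < 10 * #Y + w)
    (hsum : Fintype.card ι * w ≤ #X + #Y + e) (he : 10 * e ≤ 8 * w) :
    ∃ I J : Finset ι, Disjoint I J ∧ I ∪ J = univ ∧
      Fintype.card ι ≤ 10 * #I ∧ Fintype.card ι ≤ 10 * #J ∧
      ∃ W' : ι → Finset V, (∀ i, W' i ⊆ W i) ∧ (∀ i, #(W i) ≤ 10 * #(W' i)) ∧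
        ∀ i ∈ I, ∀ j ∈ J, ∀ a ∈ W' i, ∀ b ∈ W' j, G a b := by
  classical
  have hpart := card_eq_sum_card_inter hdisj hcover
  have hle : ∀ s i, #(s ∩ W i) ≤ w := fun s i =>
    (card_le_card inter_subset_right).trans (hsize i).le
  have hcap : ∀ i, #(X ∩ W i) + #(Y ∩ W i) ≤ w := fun i => by
    rw [← card_union_of_disjoint (hXY.mono inter_subset_left inter_subset_left),
      ← union_inter_distrib_right]
    exact hle _ i
  set P : Finset ι := {i | w ≤ 10 * #(X ∩ W i)}
  set Q : Finset ι := {i | w ≤ 10 * #(Y ∩ W i)}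
  have hPQ : Pᶜ ⊆ Q := fun i hi => by
    have := le_add_of_card_mul_le_sum hcap (by rwa [sum_add_distrib, ← hpart, ← hpart]) i
    simp only [P, Q, mem_compl, mem_filter, mem_univ, true_and] at hi ⊢
    omega
  have hP := le_ten_mul_card_filter (hle X) (by rwa [← hpart])
  have hQ := le_ten_mul_card_filter (hle Y) (by rwa [← hpart])
  obtain ⟨I, hIQ, hIP, hI, hIc⟩ := exists_subset_compl_subset hPQ hι hP hQ
  refine ⟨I, Iᶜ, disjoint_compl_right, union_compl I, hI, hIc,
    fun i => if i ∈ I then Y ∩ W i else X ∩ W i, fun i => ?_, fun i => ?_, ?_⟩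
  · dsimp only
    split_ifs <;> exact inter_subset_right
  · dsimp only
    rw [hsize]
    split_ifs with hi
    · simpa [Q] using hIQ hi
    · simpa [P] using hIP (mem_compl.2 hi)
  · intro i hi j hj a ha b hb
    dsimp only at ha hb
    rw [if_pos hi] at ha
    rw [if_neg (mem_compl.1 hj)] at hb
    exact hdom a (mem_inter.1 ha).1 b (mem_inter.1 hb).1

/-- If the vertex set of a tournament is the disjoint union of `W₁, …, W_k`, each of size
exactly `12 k²² ℓ²` (with `2 ≤ k ≤ ℓ`), and `B ⊆ W₁` is a set of size `ℓ` contained in a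
`(4, m, kℓ)`-nearly-regular set on which every vertex `v` satisfies
`d⁻(v) ≤ d⁺(v) ≤ 4 d⁻(v)`, and no `T₂K⃗_ℓ` sits on `B`, then there is a partition
`[k] = I ∪ J` with `|I|, |J| ≥ k/10` and subsets `W'_i ⊆ W_i` with `|W'_i| ≥ |W_i|/10` such
that all edges between `⋃_{i ∈ I} W'_i` and `⋃_{j ∈ J} W'_j` go from the former to the
latter. -/
theorem inductive_partition {V : Type} [Fintype V] (G : V → V → Prop) (hT : IsTournament G)
    (k ℓ : ℕ) (hk : 2 ≤ k) (hkℓ : k ≤ ℓ)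
    (W : Fin k → Finset V)
    (hdisj : ∀ i j, i ≠ j → Disjoint (W i) (W j))
    (hcover : ∀ v : V, ∃ i, v ∈ W i)
    (hsize : ∀ i, (W i).card = 12 * k ^ 22 * ℓ ^ 2)
    (B A : Finset V) (m : ℤ)
    (hBA : B ⊆ A) (hBcard : B.card = ℓ)
    (hreg : ∀ v ∈ A, inDeg G v ≤ outDeg G v ∧ outDeg G v ≤ 4 * inDeg G v)
    (hm : ∀ v ∈ A, m - 10 * (k * ℓ) ≤ (inDeg G v : ℤ) ∧ (inDeg G v : ℤ) ≤ m + 10 * (k * ℓ))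
    (hnosub : ¬ SitsOn G ℓ B) :
    ∃ I J : Finset (Fin k),
      Disjoint I J ∧ I ∪ J = Finset.univ ∧
      k ≤ 10 * I.card ∧ k ≤ 10 * J.card ∧
      ∃ W' : Fin k → Finset V,
        (∀ i, W' i ⊆ W i) ∧ (∀ i, (W i).card ≤ 10 * (W' i).card) ∧
        ∀ i ∈ I, ∀ j ∈ J, ∀ a ∈ W' i, ∀ b ∈ W' j, G a b := by
  classical
  set w := 12 * k ^ 22 * ℓ ^ 2
  have hw : 1000 * ℓ ^ 2 ≤ w := Nat.mul_le_mul_right _ <|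
    calc 1000 ≤ 12 * 2 ^ 22 := by norm_num
      _ ≤ 12 * k ^ 22 := by gcongr
  have hkℓ' : k * ℓ ≤ ℓ ^ 2 := by nlinarith
  have hℓ : 1 ≤ ℓ ^ 2 := Nat.one_le_pow _ _ (by omega)
  have hV : Fintype.card V = k * w := by
    rw [← card_univ, card_eq_sum_card_inter hdisj hcover]
    simp [hsize]
  obtain ⟨a, haB, b, hbB, hab, U, hBU, hU, hnp⟩ :=
    exists_not_isShortPath_of_not_sitsOn hBcard hnosub
  obtain ⟨X, Y, hXY, hdom, hX, hY⟩ := hT.exists_dominating_pair hab (hBU haB) (hBU hbB) hnp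
  have hin : inDeg G a ≤ inDeg G b + 20 * (k * ℓ) := by
    have := (hm a (hBA haB)).2
    have := (hm b (hBA hbB)).1
    omega
  have hdega := hT.outDeg_add_inDeg a
  have hdegb := hT.outDeg_add_inDeg b
  have hrega := hreg a (hBA haB)
  have hregb := hreg b (hBA hbB)
  rw [hV] at hdega hdegb
  have := exists_split_of_dominating hdisj hcover hsize (e := 27 * ℓ ^ 2) (by simpa using hk) hXY
    hdom (by rw [Fintype.card_fin, mul_assoc]; omega) (by rw [Fintype.card_fin, mul_assoc]; omega)
    (by rw [Fintype.card_fin]; omega) (by omega)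
  simpa only [Fintype.card_fin] using this
end

section
/- For every integer k ≥ 2 and every positive integer d, there exist tournaments on arbitrarily many vertices that are strongly (2k−1)-connected and have minimum out-degree at least d and minimum in-degree at least d, but are not k-linked. -/
/-- A directed path: a nonempty list of pairwise distinct vertices in which consecutive
vertices are joined by a directed edge. -/
def IsDipath {V : Type} (G : V → V → Prop) (p : List V) : Prop :=
  p ≠ [] ∧ p.Nodup ∧ p.Chain' G

/-- A digraph is strongly `k`-connected if it has at least `k+1` vertices and, after removing
any set `S` of at most `k-1` vertices, any vertex can reach any other by a directed path
avoiding `S`. -/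
def StronglyKConnected {V : Type} [Fintype V] (G : V → V → Prop) (k : ℕ) : Prop :=
  k + 1 ≤ Fintype.card V ∧
  ∀ S : Set V, S.ncard ≤ k - 1 → ∀ x y : V, x ∉ S → y ∉ S → x ≠ y →
    ∃ p : List V, IsDipath G p ∧ p.head? = some x ∧ p.getLast? = some y ∧ ∀ v ∈ p, v ∉ S

/-- A digraph is `k`-linked if it has at least `2k` vertices and for any `2k` distinct
vertices `x₁, …, x_k, y₁, …, y_k` there are pairwise vertex-disjoint directed paths
`P₁, …, P_k` with `P i` starting at `x i` and ending at `y i`. -/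
def KLinked {V : Type} [Fintype V] (G : V → V → Prop) (k : ℕ) : Prop :=
  2 * k ≤ Fintype.card V ∧
  ∀ x y : Fin k → V, Function.Injective (Sum.elim x y : Fin k ⊕ Fin k → V) →
    ∃ P : Fin k → List V,
      (∀ i, IsDipath G (P i) ∧ (P i).head? = some (x i) ∧ (P i).getLast? = some (y i)) ∧
      ∀ i j, i ≠ j → ∀ v ∈ P i, v ∉ P j

namespace GS

/-! ### Generic helpers -/

lemma mem_of_head?_eq {α : Type} {p : List α} {a : α} (h : p.head? = some a) : a ∈ p := by
  cases p with
  | nil => simp at h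
  | cons x t => simp at h; subst h; exact List.mem_cons_self

lemma mem_of_getLast?_eq {α : Type} {p : List α} {a : α} (h : p.getLast? = some a) : a ∈ p := by
  induction p with
  | nil => simp at h
  | cons x t ih =>
    cases t with
    | nil => simp at h; subst h; exact List.mem_cons_self
    | cons y t2 =>
      rw [List.getLast?_cons_cons] at h
      exact List.mem_cons_of_mem _ (ih h)

lemma le_ncard_of_inj {V : Type} [Fintype V] (S : Set V) {γ : Type} [Fintype γ]
    (f : γ → V) (hf : Function.Injective f) (hS : ∀ i, f i ∈ S) :
    Fintype.card γ ≤ S.ncard := by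
  have h1 : Set.range f ⊆ S := by rintro v ⟨i, rfl⟩; exact hS i
  calc Fintype.card γ = Nat.card γ := Nat.card_eq_fintype_card.symm
    _ = Nat.card (Set.range f) := (Nat.card_range_of_injective hf).symm
    _ = (Set.range f).ncard := Nat.card_coe_set_eq _
    _ ≤ S.ncard := Set.ncard_le_ncard h1 (Set.toFinite S)

lemma exists_not_mem {V : Type} [Fintype V] (S : Set V) {γ : Type} [Fintype γ]
    (f : γ → V) (hf : Function.Injective f) (hcard : S.ncard < Fintype.card γ) :
    ∃ i, f i ∉ S := by
  by_contra h
  push_neg at h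
  exact absurd (le_ncard_of_inj S f hf h) (by omega)

/-! ### The construction -/

abbrev mm (M : ℕ) : ℕ := 2 * M + 1

instance (M : ℕ) : NeZero (mm M) := ⟨Nat.succ_ne_zero (2 * M)⟩

abbrev Blk (M : ℕ) := ZMod (mm M)

abbrev Vt (M k : ℕ) := Blk M ⊕ (Fin (k - 1) ⊕ Blk M)

def circ (M : ℕ) (a b : Blk M) : Prop := 1 ≤ (b - a).val ∧ (b - a).val ≤ M

def Gr (M k : ℕ) : Vt M k → Vt M k → Prop
  | .inl a, .inl b => circ M a b
  | .inl _, .inr (.inl _) => True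
  | .inl a, .inr (.inr b) => a.val < k ∧ b.val < k ∧ a.val ≠ b.val
  | .inr (.inl _), .inl _ => False
  | .inr (.inl d), .inr (.inl d') => d < d'
  | .inr (.inl _), .inr (.inr _) => True
  | .inr (.inr b), .inl a => ¬ (a.val < k ∧ b.val < k ∧ a.val ≠ b.val)
  | .inr (.inr _), .inr (.inl _) => False
  | .inr (.inr a), .inr (.inr b) => circ M a b

variable {M k : ℕ}

@[simp] lemma gr_CC (a b : Blk M) : Gr M k (.inl a) (.inl b) ↔ circ M a b := Iff.rfl
@[simp] lemma gr_CD (a : Blk M) (d : Fin (k-1)) : Gr M k (.inl a) (.inr (.inl d)) ↔ True := Iff.rfl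
@[simp] lemma gr_CB (a b : Blk M) :
    Gr M k (.inl a) (.inr (.inr b)) ↔ (a.val < k ∧ b.val < k ∧ a.val ≠ b.val) := Iff.rfl
@[simp] lemma gr_DC (d : Fin (k-1)) (a : Blk M) : Gr M k (.inr (.inl d)) (.inl a) ↔ False := Iff.rfl
@[simp] lemma gr_DD (d d' : Fin (k-1)) : Gr M k (.inr (.inl d)) (.inr (.inl d')) ↔ d < d' := Iff.rfl
@[simp] lemma gr_DB (d : Fin (k-1)) (b : Blk M) : Gr M k (.inr (.inl d)) (.inr (.inr b)) ↔ True := Iff.rfl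
@[simp] lemma gr_BC (b a : Blk M) :
    Gr M k (.inr (.inr b)) (.inl a) ↔ ¬ (a.val < k ∧ b.val < k ∧ a.val ≠ b.val) := Iff.rfl
@[simp] lemma gr_BD (b : Blk M) (d : Fin (k-1)) : Gr M k (.inr (.inr b)) (.inr (.inl d)) ↔ False := Iff.rfl
@[simp] lemma gr_BB (a b : Blk M) : Gr M k (.inr (.inr a)) (.inr (.inr b)) ↔ circ M a b := Iff.rfl

/-! ### ZMod facts -/

lemma val_pos_of_ne {a b : Blk M} (h : a ≠ b) : 1 ≤ (b - a).val := by
  have h1 : b - a ≠ 0 := sub_ne_zero.mpr (Ne.symm h)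
  have h0 : (b - a).val ≠ 0 := fun h0 => h1 ((ZMod.val_eq_zero _).mp h0)
  omega

lemma sub_val_rev (a b : Blk M) (h : a ≠ b) : (a - b).val = mm M - (b - a).val := by
  have h1 : b - a ≠ 0 := sub_ne_zero.mpr (Ne.symm h)
  have h2 : a - b = -(b - a) := by ring
  rw [h2, ZMod.neg_val, if_neg h1]

lemma val_natCast {i : ℕ} (h : i < mm M) : ((i : Blk M)).val = i := ZMod.val_cast_of_lt h

lemma natCast_inj {i j : ℕ} (hi : i < mm M) (hj : j < mm M) (h : (i : Blk M) = (j : Blk M)) :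
    i = j := by
  have := congrArg ZMod.val h
  rwa [val_natCast hi, val_natCast hj] at this

lemma circ_irrefl (a : Blk M) : ¬ circ M a a := by
  simp [circ, sub_self]

lemma circ_dicho {a b : Blk M} (h : a ≠ b) : circ M a b ↔ ¬ circ M b a := by
  have h1 := val_pos_of_ne h
  have h2 := val_pos_of_ne (Ne.symm h)
  have h3 := sub_val_rev a b h
  have h4 : (b - a).val < mm M := ZMod.val_lt _
  unfold circ
  rw [h3]
  simp only [mm] at *
  omega

/-! ### Tournament -/

lemma fin_lt_dicho {d d' : Fin (k-1)} (h : d ≠ d') : d < d' ↔ ¬ d' < d := by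
  have : d.val ≠ d'.val := fun hh => h (Fin.ext hh)
  simp only [Fin.lt_def]
  omega

lemma tournament_Gr : IsTournament (Gr M k) := by
  constructor
  · rintro (a | d | b)
    · exact circ_irrefl a
    · simp
    · exact circ_irrefl b
  · rintro (a | da | ba) (b | db | bb) hne
    · exact circ_dicho (fun h => hne (by rw [h]))
    · simp
    · simp [not_not]
    · simp
    · exact fin_lt_dicho (fun h => hne (by rw [h]))
    · simp
    · simp
    · simp
    · exact circ_dicho (fun h => hne (by rw [h]))


variable {M k : ℕ}

/-! ### Paths in the circulant tournament -/

lemma circ_path_aux (S' : Set (Blk M)) (hS : S'.ncard < M) :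
    ∀ δ : ℕ, ∀ u v : Blk M, (v - u).val = δ → u ≠ v → u ∉ S' → v ∉ S' →
    ∃ p : List (Blk M), p ≠ [] ∧ p.Nodup ∧ p.Chain' (circ M) ∧
      p.head? = some u ∧ p.getLast? = some v ∧ (∀ w ∈ p, w ∉ S') ∧
      (∀ w ∈ p, (w - u).val ≤ δ) := by
  intro δ
  induction δ using Nat.strong_induction_on with
  | _ δ ih =>
    intro u v hδ hne hu hv
    have hδ1 : 1 ≤ δ := hδ ▸ val_pos_of_ne hne
    by_cases hle : δ ≤ M
    · refine ⟨[u, v], by simp, by simp [hne], ?_, rfl, rfl, ?_, ?_⟩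
      · simp only [List.Chain', List.isChain_cons_cons, List.isChain_singleton, and_true]
        exact ⟨by omega, by omega⟩
      · intro w hw
        rcases List.mem_pair.mp hw with rfl | rfl
        · exact hu
        · exact hv
      · intro w hw
        rcases List.mem_pair.mp hw with rfl | rfl
        · simp [sub_self]
        · omega
    · -- pick a surviving step w = u + t, 1 ≤ t ≤ M
      have hMpos : 0 < M := by omega
      obtain ⟨t0, ht0⟩ := exists_not_mem S'
        (fun t : Fin M => u + ((t.val + 1 : ℕ) : Blk M))
        (by
          intro s t hst
          have h1 : ((s.val + 1 : ℕ) : Blk M) = ((t.val + 1 : ℕ) : Blk M) := by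
            exact add_left_cancel hst
          have := natCast_inj (by have := s.isLt; simp only [mm]; omega)
            (by have := t.isLt; simp only [mm]; omega) h1
          exact Fin.ext (by omega))
        (by rw [Fintype.card_fin]; exact hS)
      set t : ℕ := t0.val + 1 with htdef
      have ht1 : 1 ≤ t := by omega
      have htM : t ≤ M := by have := t0.isLt; omega
      set w : Blk M := u + (t : Blk M) with hwdef
      have hwu : (w - u).val = t := by
        rw [hwdef, add_sub_cancel_left]
        exact val_natCast (by simp only [mm]; omega)
      have hδlt : δ < mm M := hδ ▸ ZMod.val_lt _
      have hvw : (v - w).val = δ - t := by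
        have h1 : (v - w) + (w - u) = v - u := by ring
        have h2 := ZMod.val_add (v - w) (w - u)
        rw [h1, hδ, hwu] at h2
        have hα : (v - w).val < mm M := ZMod.val_lt _
        rcases Nat.lt_or_ge ((v - w).val + t) (mm M) with hcase | hcase
        · rw [Nat.mod_eq_of_lt hcase] at h2; omega
        · have h3 : (v - w).val + t - mm M < mm M := by omega
          have h4 : ((v - w).val + t) % mm M = (v - w).val + t - mm M := by
            rw [Nat.mod_eq_sub_mod hcase, Nat.mod_eq_of_lt h3]
          rw [h4] at h2
          simp only [mm] at *
          omega
      have hwv : w ≠ v := by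
        intro h
        rw [h, sub_self, ZMod.val_zero] at hvw
        omega
      have hwS : w ∉ S' := ht0
      obtain ⟨q, hq0, hq1, hq2, hq3, hq4, hq5, hq6⟩ :=
        ih (δ - t) (by omega) w v hvw hwv hwS hv
      have huq : u ∉ q := by
        intro hmem
        have h1 := hq6 u hmem
        have h2 : (u - w).val = mm M - t := by
          have : u ≠ w := by
            intro h; rw [← h, sub_self, ZMod.val_zero] at hwu; omega
          rw [sub_val_rev u w (by exact this), hwu]
        simp only [mm] at *
        omega
      refine ⟨u :: q, by simp, List.nodup_cons.mpr ⟨huq, hq1⟩, ?_, rfl, ?_, ?_, ?_⟩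
      · show List.IsChain _ _
        rw [List.isChain_cons]
        refine ⟨?_, hq2⟩
        intro y hy
        rw [hq3] at hy
        simp only [Option.mem_def, Option.some.injEq] at hy
        subst hy
        exact ⟨by omega, by omega⟩
      · cases q with
        | nil => simp at hq3
        | cons b t2 => rw [List.getLast?_cons_cons]; exact hq4
      · intro x hx
        rcases List.mem_cons.mp hx with rfl | hx2
        · exact hu
        · exact hq5 x hx2
      · intro x hx
        rcases List.mem_cons.mp hx with rfl | hx2
        · simp [sub_self]
        · have h1 := hq6 x hx2
          have h2 : (x - u).val = (x - w).val + t := by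
            have hr : (x - w) + (w - u) = x - u := by ring
            rw [← hr, ZMod.val_add_of_lt (by rw [hwu]; simp only [mm] at *; omega), hwu]
          omega

lemma circ_path (S' : Set (Blk M)) (hS : S'.ncard < M) (u v : Blk M)
    (hu : u ∉ S') (hv : v ∉ S') :
    ∃ p : List (Blk M), p ≠ [] ∧ p.Nodup ∧ p.Chain' (circ M) ∧
      p.head? = some u ∧ p.getLast? = some v ∧ (∀ w ∈ p, w ∉ S') := by
  by_cases hne : u = v
  · exact ⟨[u], by simp, by simp, by simp [List.Chain'], rfl, by simp [hne], by
      intro w hw; rcases List.mem_singleton.mp hw with rfl; exact hu⟩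
  · obtain ⟨p, h0, h1, h2, h3, h4, h5, _⟩ :=
      circ_path_aux S' hS ((v - u).val) u v rfl hne hu hv
    exact ⟨p, h0, h1, h2, h3, h4, h5⟩

variable {M k : ℕ}

/-! ### Embedded block paths and survivor picking -/

lemma path_embed (f : Blk M → Vt M k) (hf : Function.Injective f)
    (hedge : ∀ a b : Blk M, circ M a b → Gr M k (f a) (f b))
    (S : Set (Vt M k)) (hS : S.ncard < M) (u v : Blk M)
    (hu : f u ∉ S) (hv : f v ∉ S) :
    ∃ p : List (Vt M k), p ≠ [] ∧ p.Nodup ∧ p.Chain' (Gr M k) ∧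
      p.head? = some (f u) ∧ p.getLast? = some (f v) ∧ (∀ w ∈ p, w ∉ S) ∧
      (∀ w ∈ p, ∃ z : Blk M, w = f z) := by
  set S' : Set (Blk M) := f ⁻¹' S with hS'def
  have hS'card : S'.ncard < M := by
    have h1 : f '' S' ⊆ S := Set.image_preimage_subset f S
    have h2 : S'.ncard = (f '' S').ncard := (Set.ncard_image_of_injective S' hf).symm
    have h3 := Set.ncard_le_ncard h1 (Set.toFinite S)
    omega
  obtain ⟨p, h0, h1, h2, h3, h4, h5⟩ := circ_path S' hS'card u v hu hv
  refine ⟨p.map f, by simpa using h0, h1.map hf, ?_, ?_, ?_, ?_, ?_⟩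
  · exact (List.isChain_map f).mpr (h2.imp hedge)
  · rw [List.head?_map, h3]; rfl
  · rw [List.getLast?_map, h4]; rfl
  · intro w hw
    obtain ⟨z, hz, rfl⟩ := List.mem_map.mp hw
    exact h5 z hz
  · intro w hw
    obtain ⟨z, _, rfl⟩ := List.mem_map.mp hw
    exact ⟨z, rfl⟩

lemma pick_embed (hk2 : 2 ≤ k) (hkM : 2 * k ≤ M) (f : Blk M → Vt M k)
    (hf : Function.Injective f) (S : Set (Vt M k)) (hS : S.ncard ≤ 2 * k - 2) :
    ∃ z : Blk M, f z ∉ S ∧ k ≤ z.val := by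
  obtain ⟨t, ht⟩ := exists_not_mem S
    (fun t : Fin (2 * k - 1) => f ((k + t.val : ℕ) : Blk M))
    (by
      intro s t hst
      have h1 := hf hst
      have h2 := natCast_inj (i := k + s.val) (j := k + t.val)
        (by have := s.isLt; simp only [mm]; omega)
        (by have := t.isLt; simp only [mm]; omega) h1
      exact Fin.ext (by omega))
    (by rw [Fintype.card_fin]; omega)
  refine ⟨((k + t.val : ℕ) : Blk M), ht, ?_⟩
  rw [val_natCast (by have := t.isLt; simp only [mm]; omega)]; omega

/-- If all of `D` is deleted, a surviving bridge pair `x_l → y_j`, `l ≠ j`, exists. -/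
lemma bridge (hk2 : 2 ≤ k) (hkM : 2 * k ≤ M) (S : Set (Vt M k)) (hS : S.ncard ≤ 2 * k - 2)
    (hD : ∀ d0 : Fin (k - 1), (Sum.inr (Sum.inl d0) : Vt M k) ∈ S) :
    ∃ l j : Fin k, l ≠ j ∧ (Sum.inl ((l.val : ℕ) : Blk M) : Vt M k) ∉ S ∧
      (Sum.inr (Sum.inr ((j.val : ℕ) : Blk M)) : Vt M k) ∉ S := by
  have hcast : ∀ i : Fin k, (i.val : ℕ) < mm M := by
    intro i; have := i.isLt; simp only [mm]; omega
  have hxinj : Function.Injective (fun l : Fin k => (Sum.inl ((l.val : ℕ) : Blk M) : Vt M k)) := by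
    intro s t hst
    have h1 : ((s.val : ℕ) : Blk M) = ((t.val : ℕ) : Blk M) := by
      simpa using hst
    exact Fin.ext (natCast_inj (hcast s) (hcast t) h1)
  have hyinj : Function.Injective
      (fun l : Fin k => (Sum.inr (Sum.inr ((l.val : ℕ) : Blk M)) : Vt M k)) := by
    intro s t hst
    have h1 : ((s.val : ℕ) : Blk M) = ((t.val : ℕ) : Blk M) := by
      simpa using hst
    exact Fin.ext (natCast_inj (hcast s) (hcast t) h1)
  by_contra hcon
  push_neg at hcon
  by_cases hX : ∀ l : Fin k, (Sum.inl ((l.val : ℕ) : Blk M) : Vt M k) ∈ S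
  · -- all of X dead together with D: 2k-1 elements of S
    have := le_ncard_of_inj S
      (Sum.elim (fun i : Fin (k - 1) => (Sum.inr (Sum.inl i) : Vt M k))
        (fun l : Fin k => (Sum.inl ((l.val : ℕ) : Blk M) : Vt M k)))
      (by
        rintro (i | i) (j | j) h
        · simp only [Sum.elim_inl] at h
          exact congrArg Sum.inl (by injection (Sum.inr.inj h))
        · simp at h
        · simp at h
        · simp only [Sum.elim_inr] at h
          exact congrArg Sum.inr (hxinj h))
      (by rintro (i | i)
          · exact hD i
          · exact hX i)
    rw [Fintype.card_sum, Fintype.card_fin, Fintype.card_fin] at this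
    omega
  · push_neg at hX
    obtain ⟨l₀, hl₀⟩ := hX
    by_cases hYl₀ : (Sum.inr (Sum.inr ((l₀.val : ℕ) : Blk M)) : Vt M k) ∈ S
    · -- then all of Y is dead (y_j for j ≠ l₀ via hcon, and y_{l₀} by hYl₀)
      have hYall : ∀ j : Fin k, (Sum.inr (Sum.inr ((j.val : ℕ) : Blk M)) : Vt M k) ∈ S := by
        intro j
        by_cases hj : j = l₀
        · rw [hj]; exact hYl₀
        · exact hcon l₀ j (fun h => hj h.symm) hl₀
      have := le_ncard_of_inj S
        (Sum.elim (fun i : Fin (k - 1) => (Sum.inr (Sum.inl i) : Vt M k))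
          (fun l : Fin k => (Sum.inr (Sum.inr ((l.val : ℕ) : Blk M)) : Vt M k)))
        (by
          rintro (i | i) (j | j) h
          · simp only [Sum.elim_inl] at h
            exact congrArg Sum.inl (by injection (Sum.inr.inj h))
          · simp only [Sum.elim_inl, Sum.elim_inr] at h
            exact absurd (Sum.inr.inj h) (by simp)
          · simp only [Sum.elim_inl, Sum.elim_inr] at h
            exact absurd (Sum.inr.inj h) (by simp)
          · simp only [Sum.elim_inr] at h
            exact congrArg Sum.inr (hyinj h))
        (by rintro (i | i)
            · exact hD i
            · exact hYall i)
      rw [Fintype.card_sum, Fintype.card_fin, Fintype.card_fin] at this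
      omega
    · -- y_{l₀} alive; then every x_l with l ≠ l₀ is dead, and every y_j with j ≠ l₀ is dead
      have hXdead : ∀ l : Fin k, l ≠ l₀ → (Sum.inl ((l.val : ℕ) : Blk M) : Vt M k) ∈ S := by
        intro l hl
        by_contra hxl
        exact hYl₀ (hcon l l₀ hl hxl)
      have hYdead : ∀ j : Fin k, j ≠ l₀ → (Sum.inr (Sum.inr ((j.val : ℕ) : Blk M)) : Vt M k) ∈ S := by
        intro j hj
        exact hcon l₀ j (fun h => hj h.symm) hl₀
      set sa : Fin (k - 1) → ℕ := fun i => if i.val < l₀.val then i.val else i.val + 1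
        with hsadef
      have hsalt : ∀ i, sa i < k := by
        intro i; have := i.isLt; simp only [hsadef]; split <;> omega
      have hsane : ∀ i, sa i ≠ l₀.val := by
        intro i; simp only [hsadef]; split <;> omega
      have hsainj : Function.Injective sa := by
        intro i j h; simp only [hsadef] at h
        apply Fin.ext
        by_cases h1 : i.val < l₀.val <;> by_cases h2 : j.val < l₀.val <;>
          simp [h1, h2] at h <;> omega
      have hsacast : ∀ i, sa i < mm M := by
        intro i; have := hsalt i; simp only [mm]; omega
      have hcard := le_ncard_of_inj S
        (Sum.elim (fun i : Fin (k - 1) => (Sum.inr (Sum.inl i) : Vt M k))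
          (Sum.elim
            (fun i : Fin (k - 1) => (Sum.inl ((sa i : ℕ) : Blk M) : Vt M k))
            (fun i : Fin (k - 1) => (Sum.inr (Sum.inr ((sa i : ℕ) : Blk M)) : Vt M k))))
        (by
          rintro (i | i | i) (j | j | j) h <;>
            simp only [Sum.elim_inl, Sum.elim_inr] at h
          · exact congrArg Sum.inl (by injection (Sum.inr.inj h))
          · exact absurd h (by simp)
          · exact absurd (Sum.inr.inj h) (by simp)
          · exact absurd h (by simp)
          · have h2 := natCast_inj (hsacast i) (hsacast j) (by injection h)
            exact congrArg (Sum.inr ∘ Sum.inl) (hsainj h2)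
          · exact absurd h (by simp)
          · exact absurd (Sum.inr.inj h) (by simp)
          · exact absurd h (by simp)
          · have h2 := natCast_inj (hsacast i) (hsacast j)
              (by injection (Sum.inr.inj h))
            exact congrArg (Sum.inr ∘ Sum.inr) (hsainj h2))
        (by
          rintro (i | i | i)
          · exact hD i
          · exact hXdead ⟨sa i, hsalt i⟩ (fun h => hsane i (congrArg Fin.val h))
          · exact hYdead ⟨sa i, hsalt i⟩ (fun h => hsane i (congrArg Fin.val h)))
      rw [Fintype.card_sum, Fintype.card_sum, Fintype.card_fin] at hcard
      omega

/-! ### Connectivity -/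

lemma getLast?_cons_of_ne_nil {α : Type} {a : α} {p : List α} (h : p ≠ []) :
    (a :: p).getLast? = p.getLast? := by
  cases p with
  | nil => exact absurd rfl h
  | cons b t => rw [List.getLast?_cons_cons]

lemma inl_inj' : Function.Injective (Sum.inl : Blk M → Vt M k) := Sum.inl_injective

lemma inrr_inj' : Function.Injective (fun z : Blk M => (Sum.inr (Sum.inr z) : Vt M k)) := by
  intro a b h
  simpa using h

lemma conn (hk2 : 2 ≤ k) (hkM : 2 * k ≤ M) (S : Set (Vt M k)) (hS : S.ncard ≤ 2 * k - 2) :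
    ∀ a b : Vt M k, a ∉ S → b ∉ S → a ≠ b →
    ∃ p : List (Vt M k), IsDipath (Gr M k) p ∧ p.head? = some a ∧ p.getLast? = some b ∧
      ∀ v ∈ p, v ∉ S := by
  have hSM : S.ncard < M := by omega
  have pathC : ∀ u v : Blk M, (Sum.inl u : Vt M k) ∉ S → (Sum.inl v : Vt M k) ∉ S →
      ∃ p : List (Vt M k), p ≠ [] ∧ p.Nodup ∧ p.Chain' (Gr M k) ∧
        p.head? = some (Sum.inl u) ∧ p.getLast? = some (Sum.inl v) ∧
        (∀ w ∈ p, w ∉ S) ∧ (∀ w ∈ p, ∃ z : Blk M, w = Sum.inl z) :=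
    fun u v hu hv => path_embed Sum.inl inl_inj' (fun _ _ h => h) S hSM u v hu hv
  have pathB : ∀ u v : Blk M,
      (Sum.inr (Sum.inr u) : Vt M k) ∉ S → (Sum.inr (Sum.inr v) : Vt M k) ∉ S →
      ∃ p : List (Vt M k), p ≠ [] ∧ p.Nodup ∧ p.Chain' (Gr M k) ∧
        p.head? = some (Sum.inr (Sum.inr u)) ∧ p.getLast? = some (Sum.inr (Sum.inr v)) ∧
        (∀ w ∈ p, w ∉ S) ∧ (∀ w ∈ p, ∃ z : Blk M, w = Sum.inr (Sum.inr z)) :=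
    fun u v hu hv =>
      path_embed (fun z => Sum.inr (Sum.inr z)) inrr_inj' (fun _ _ h => h) S hSM u v hu hv
  have pickC : ∃ z : Blk M, (Sum.inl z : Vt M k) ∉ S ∧ k ≤ z.val :=
    pick_embed hk2 hkM Sum.inl inl_inj' S hS
  have pickB : ∃ z : Blk M, (Sum.inr (Sum.inr z) : Vt M k) ∉ S ∧ k ≤ z.val :=
    pick_embed hk2 hkM (fun z => Sum.inr (Sum.inr z)) inrr_inj' S hS
  rintro (ca | da | ba) (cb | db | bb) ha hb hne
  · -- C → C
    obtain ⟨p, h0, h1, h2, h3, h4, h5, _⟩ := pathC ca cb ha hb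
    exact ⟨p, ⟨h0, h1, h2⟩, h3, h4, h5⟩
  · -- C → D
    refine ⟨[Sum.inl ca, Sum.inr (Sum.inl db)], ⟨by simp, by simp, by simp [List.Chain']⟩, rfl, rfl, ?_⟩
    intro v hv
    rcases List.mem_pair.mp hv with rfl | rfl
    · exact ha
    · exact hb
  · -- C → B
    by_cases hD : ∃ d0 : Fin (k - 1), (Sum.inr (Sum.inl d0) : Vt M k) ∉ S
    · obtain ⟨d0, hd0⟩ := hD
      refine ⟨[Sum.inl ca, Sum.inr (Sum.inl d0), Sum.inr (Sum.inr bb)],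
        ⟨by simp, by simp, by simp [List.Chain']⟩, rfl, rfl, ?_⟩
      intro v hv
      simp only [List.mem_cons, List.not_mem_nil, or_false] at hv
      rcases hv with rfl | rfl | rfl
      · exact ha
      · exact hd0
      · exact hb
    · push_neg at hD
      obtain ⟨l, j, hlj, hxl, hyj⟩ := bridge hk2 hkM S hS hD
      obtain ⟨pc, c0, c1, c2, c3, c4, c5, c6⟩ := pathC ca ((l.val : ℕ) : Blk M) ha hxl
      obtain ⟨pb, b0, b1, b2, b3, b4, b5, b6⟩ := pathB ((j.val : ℕ) : Blk M) bb hyj hb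
      have hvl : (((l.val : ℕ) : Blk M)).val = l.val :=
        val_natCast (by have := l.isLt; simp only [mm]; omega)
      have hvj : (((j.val : ℕ) : Blk M)).val = j.val :=
        val_natCast (by have := j.isLt; simp only [mm]; omega)
      refine ⟨pc ++ pb, ⟨by simp [c0], ?_, ?_⟩, ?_, ?_, ?_⟩
      · refine c1.append b1 ?_
        intro v hvc hvb
        obtain ⟨z, rfl⟩ := c6 v hvc
        obtain ⟨z', hz'⟩ := b6 _ hvb
        simp at hz'
      · show List.IsChain _ _
        rw [List.isChain_append]
        refine ⟨c2, b2, ?_⟩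
        intro x hx y hy
        rw [c4] at hx
        rw [b3] at hy
        simp only [Option.mem_def, Option.some.injEq] at hx hy
        subst hx; subst hy
        refine (gr_CB _ _).mpr ⟨?_, ?_, ?_⟩
        · rw [hvl]; exact l.isLt
        · rw [hvj]; exact j.isLt
        · rw [hvl, hvj]
          exact fun h => hlj (Fin.ext h)
      · rw [List.head?_append, c3]; rfl
      · rw [List.getLast?_append, b4]; rfl
      · intro v hv
        rcases List.mem_append.mp hv with h | h
        · exact c5 v h
        · exact b5 v h
  · -- D → C
    obtain ⟨z, hz, hzk⟩ := pickB
    refine ⟨[Sum.inr (Sum.inl da), Sum.inr (Sum.inr z), Sum.inl cb],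
      ⟨by simp, by simp, ?_⟩, rfl, rfl, ?_⟩
    · simp only [List.Chain', List.isChain_cons_cons, List.isChain_singleton, and_true, gr_DB, gr_BC, true_and]
      rintro ⟨_, h2, _⟩
      omega
    · intro v hv
      simp only [List.mem_cons, List.not_mem_nil, or_false] at hv
      rcases hv with rfl | rfl | rfl
      · exact ha
      · exact hz
      · exact hb
  · -- D → D
    obtain ⟨z, hz, hzk⟩ := pickB
    obtain ⟨c, hc, hck⟩ := pickC
    refine ⟨[Sum.inr (Sum.inl da), Sum.inr (Sum.inr z), Sum.inl c, Sum.inr (Sum.inl db)],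
      ⟨by simp, ?_, ?_⟩, rfl, rfl, ?_⟩
    · have : da ≠ db := fun h => hne (by rw [h])
      simp [this]
    · simp only [List.Chain', List.isChain_cons_cons, List.isChain_singleton, and_true, gr_DB, gr_BC, gr_CD,
        true_and]
      rintro ⟨h1, h2, _⟩
      omega
    · intro v hv
      simp only [List.mem_cons, List.not_mem_nil, or_false] at hv
      rcases hv with rfl | rfl | rfl | rfl
      · exact ha
      · exact hz
      · exact hc
      · exact hb
  · -- D → B
    refine ⟨[Sum.inr (Sum.inl da), Sum.inr (Sum.inr bb)], ⟨by simp, by simp, by simp [List.Chain']⟩,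
      rfl, rfl, ?_⟩
    intro v hv
    rcases List.mem_pair.mp hv with rfl | rfl
    · exact ha
    · exact hb
  · -- B → C
    by_cases hex : cb.val < k ∧ ba.val < k ∧ cb.val ≠ ba.val
    · obtain ⟨c, hc, hck⟩ := pickC
      obtain ⟨pc, c0, c1, c2, c3, c4, c5, c6⟩ := pathC c cb hc hb
      refine ⟨Sum.inr (Sum.inr ba) :: pc, ⟨by simp, ?_, ?_⟩, rfl, ?_, ?_⟩
      · refine List.nodup_cons.mpr ⟨?_, c1⟩
        intro hmem
        obtain ⟨z, hz⟩ := c6 _ hmem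
        simp at hz
      · show List.IsChain _ _
        rw [List.isChain_cons]
        refine ⟨?_, c2⟩
        intro y hy
        rw [c3] at hy
        simp only [Option.mem_def, Option.some.injEq] at hy
        subst hy
        refine (gr_BC _ _).mpr ?_
        rintro ⟨h1, _, _⟩
        omega
      · rw [getLast?_cons_of_ne_nil c0, c4]
      · intro v hv
        rcases List.mem_cons.mp hv with rfl | h
        · exact ha
        · exact c5 v h
    · refine ⟨[Sum.inr (Sum.inr ba), Sum.inl cb], ⟨by simp, by simp, ?_⟩, rfl, rfl, ?_⟩
      · simp only [List.Chain', List.isChain_cons_cons, List.isChain_singleton, and_true, gr_BC]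
        exact hex
      · intro v hv
        rcases List.mem_pair.mp hv with rfl | rfl
        · exact ha
        · exact hb
  · -- B → D
    obtain ⟨c, hc, hck⟩ := pickC
    refine ⟨[Sum.inr (Sum.inr ba), Sum.inl c, Sum.inr (Sum.inl db)],
      ⟨by simp, by simp, ?_⟩, rfl, rfl, ?_⟩
    · simp only [List.Chain', List.isChain_cons_cons, List.isChain_singleton, and_true, gr_BC, gr_CD, true_and,
        and_true]
      rintro ⟨h1, h2, _⟩
      omega
    · intro v hv
      simp only [List.mem_cons, List.not_mem_nil, or_false] at hv
      rcases hv with rfl | rfl | rfl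
      · exact ha
      · exact hc
      · exact hb
  · -- B → B
    obtain ⟨p, h0, h1, h2, h3, h4, h5, _⟩ := pathB ba bb ha hb
    exact ⟨p, ⟨h0, h1, h2⟩, h3, h4, h5⟩

/-! ### Degrees -/

lemma outDeg_ge (hk2 : 2 ≤ k) (hkM : 2 * k ≤ M) {d : ℕ} (hd : d ≤ M) (v : Vt M k) :
    d ≤ outDeg (Gr M k) v := by
  rcases v with a | da | ba
  · refine le_of_eq_of_le (Fintype.card_fin d).symm
      (le_ncard_of_inj _ (fun i : Fin d => (Sum.inl (a + ((i.val + 1 : ℕ) : Blk M)) : Vt M k))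
        ?_ ?_)
    · intro s t hst
      have h1 : a + ((s.val + 1 : ℕ) : Blk M) = a + ((t.val + 1 : ℕ) : Blk M) := by
        simpa using hst
      have h2 := natCast_inj (i := s.val + 1) (j := t.val + 1)
        (by have := s.isLt; simp only [mm]; omega)
        (by have := t.isLt; simp only [mm]; omega) (add_left_cancel h1)
      exact Fin.ext (by omega)
    · intro i
      show Gr M k (Sum.inl a) (Sum.inl (a + ((i.val + 1 : ℕ) : Blk M)))
      refine (gr_CC _ _).mpr ?_
      have hv : ((a + ((i.val + 1 : ℕ) : Blk M)) - a).val = i.val + 1 := by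
        rw [add_sub_cancel_left]
        exact val_natCast (by have := i.isLt; simp only [mm]; omega)
      exact ⟨by omega, by rw [hv]; have := i.isLt; omega⟩
  · refine le_of_eq_of_le (Fintype.card_fin d).symm
      (le_ncard_of_inj _
        (fun i : Fin d => (Sum.inr (Sum.inr ((i.val : ℕ) : Blk M)) : Vt M k)) ?_ ?_)
    · intro s t hst
      have h1 : ((s.val : ℕ) : Blk M) = ((t.val : ℕ) : Blk M) := by simpa using hst
      exact Fin.ext (natCast_inj (by have := s.isLt; simp only [mm]; omega)
        (by have := t.isLt; simp only [mm]; omega) h1)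
    · intro i
      show Gr M k (Sum.inr (Sum.inl da)) (Sum.inr (Sum.inr ((i.val : ℕ) : Blk M)))
      simp
  · refine le_of_eq_of_le (Fintype.card_fin d).symm
      (le_ncard_of_inj _
        (fun i : Fin d => (Sum.inr (Sum.inr (ba + ((i.val + 1 : ℕ) : Blk M))) : Vt M k))
        ?_ ?_)
    · intro s t hst
      have h1 : ba + ((s.val + 1 : ℕ) : Blk M) = ba + ((t.val + 1 : ℕ) : Blk M) := by
        simpa using hst
      have h2 := natCast_inj (i := s.val + 1) (j := t.val + 1)
        (by have := s.isLt; simp only [mm]; omega)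
        (by have := t.isLt; simp only [mm]; omega) (add_left_cancel h1)
      exact Fin.ext (by omega)
    · intro i
      show Gr M k (Sum.inr (Sum.inr ba)) (Sum.inr (Sum.inr (ba + ((i.val + 1 : ℕ) : Blk M))))
      refine (gr_BB _ _).mpr ?_
      have hv : ((ba + ((i.val + 1 : ℕ) : Blk M)) - ba).val = i.val + 1 := by
        rw [add_sub_cancel_left]
        exact val_natCast (by have := i.isLt; simp only [mm]; omega)
      exact ⟨by omega, by rw [hv]; have := i.isLt; omega⟩

lemma inDeg_ge (hk2 : 2 ≤ k) (hkM : 2 * k ≤ M) {d : ℕ} (hd : d ≤ M) (v : Vt M k) :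
    d ≤ inDeg (Gr M k) v := by
  rcases v with a | da | ba
  · refine le_of_eq_of_le (Fintype.card_fin d).symm
      (le_ncard_of_inj _ (fun i : Fin d => (Sum.inl (a - ((i.val + 1 : ℕ) : Blk M)) : Vt M k))
        ?_ ?_)
    · intro s t hst
      have h1 : a - ((s.val + 1 : ℕ) : Blk M) = a - ((t.val + 1 : ℕ) : Blk M) := by
        simpa using hst
      have h1' : ((s.val + 1 : ℕ) : Blk M) = ((t.val + 1 : ℕ) : Blk M) := by
        have := sub_right_injective h1
        exact this
      have h2 := natCast_inj (i := s.val + 1) (j := t.val + 1)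
        (by have := s.isLt; simp only [mm]; omega)
        (by have := t.isLt; simp only [mm]; omega) h1'
      exact Fin.ext (by omega)
    · intro i
      show Gr M k (Sum.inl (a - ((i.val + 1 : ℕ) : Blk M))) (Sum.inl a)
      refine (gr_CC _ _).mpr ?_
      have hv : (a - (a - ((i.val + 1 : ℕ) : Blk M))).val = i.val + 1 := by
        rw [sub_sub_cancel]
        exact val_natCast (by have := i.isLt; simp only [mm]; omega)
      exact ⟨by omega, by rw [hv]; have := i.isLt; omega⟩
  · refine le_of_eq_of_le (Fintype.card_fin d).symm
      (le_ncard_of_inj _ (fun i : Fin d => (Sum.inl ((i.val : ℕ) : Blk M) : Vt M k)) ?_ ?_)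
    · intro s t hst
      have h1 : ((s.val : ℕ) : Blk M) = ((t.val : ℕ) : Blk M) := by simpa using hst
      exact Fin.ext (natCast_inj (by have := s.isLt; simp only [mm]; omega)
        (by have := t.isLt; simp only [mm]; omega) h1)
    · intro i
      show Gr M k (Sum.inl ((i.val : ℕ) : Blk M)) (Sum.inr (Sum.inl da))
      simp
  · refine le_of_eq_of_le (Fintype.card_fin d).symm
      (le_ncard_of_inj _
        (fun i : Fin d => (Sum.inr (Sum.inr (ba - ((i.val + 1 : ℕ) : Blk M))) : Vt M k))
        ?_ ?_)
    · intro s t hst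
      have h1 : ba - ((s.val + 1 : ℕ) : Blk M) = ba - ((t.val + 1 : ℕ) : Blk M) := by
        simpa using hst
      have h1' : ((s.val + 1 : ℕ) : Blk M) = ((t.val + 1 : ℕ) : Blk M) :=
        sub_right_injective h1
      have h2 := natCast_inj (i := s.val + 1) (j := t.val + 1)
        (by have := s.isLt; simp only [mm]; omega)
        (by have := t.isLt; simp only [mm]; omega) h1'
      exact Fin.ext (by omega)
    · intro i
      show Gr M k (Sum.inr (Sum.inr (ba - ((i.val + 1 : ℕ) : Blk M)))) (Sum.inr (Sum.inr ba))
      refine (gr_BB _ _).mpr ?_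
      have hv : (ba - (ba - ((i.val + 1 : ℕ) : Blk M))).val = i.val + 1 := by
        rw [sub_sub_cancel]
        exact val_natCast (by have := i.isLt; simp only [mm]; omega)
      exact ⟨by omega, by rw [hv]; have := i.isLt; omega⟩

/-! ### Non-linkedness -/

lemma crossing {α : Type} (G : α → α → Prop) (Bs : α → Prop) :
    ∀ (p : List α), p.Chain' G → ∀ a z, p.head? = some a → p.getLast? = some z →
    ¬ Bs a → Bs z →
    ∃ u r, G u r ∧ ¬ Bs u ∧ Bs r ∧ u ∈ p ∧ r ∈ p := by
  intro p
  induction p with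
  | nil => intro _ a z h; simp at h
  | cons x t ih =>
    intro hc a z hh hl hna hz
    have hax : x = a := by simpa using hh
    subst hax
    cases t with
    | nil =>
      simp only [List.getLast?_singleton, Option.some.injEq] at hl
      subst hl
      exact absurd hz hna
    | cons b t2 =>
      by_cases hb : Bs b
      · exact ⟨x, b, (List.isChain_cons_cons.mp hc).1, hna, hb, List.mem_cons_self,
          List.mem_cons_of_mem _ (List.mem_cons_self)⟩
      · obtain ⟨u, r, h1, h2, h3, h4, h5⟩ := ih (List.isChain_cons_cons.mp hc).2 b z rfl
          (by rw [← List.getLast?_cons_cons]; exact hl) hb hz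
        exact ⟨u, r, h1, h2, h3, List.mem_cons_of_mem _ h4, List.mem_cons_of_mem _ h5⟩

lemma unlinked (hk2 : 2 ≤ k) (hkM : 2 * k ≤ M) :
    ¬ ∃ P : Fin k → List (Vt M k),
      (∀ i, IsDipath (Gr M k) (P i) ∧
        (P i).head? = some (Sum.inl ((i.val : ℕ) : Blk M)) ∧
        (P i).getLast? = some (Sum.inr (Sum.inr ((i.val : ℕ) : Blk M)))) ∧
      ∀ i j, i ≠ j → ∀ v ∈ P i, v ∉ P j := by
  rintro ⟨P, hP, hdisj⟩
  have hcast : ∀ i : Fin k, ((i.val : ℕ) : Blk M).val = i.val := by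
    intro i
    exact val_natCast (by have := i.isLt; simp only [mm]; omega)
  have hxmem : ∀ i, (Sum.inl ((i.val : ℕ) : Blk M) : Vt M k) ∈ P i := by
    intro i; exact mem_of_head?_eq (hP i).2.1
  have hymem : ∀ i, (Sum.inr (Sum.inr ((i.val : ℕ) : Blk M)) : Vt M k) ∈ P i := by
    intro i; exact mem_of_getLast?_eq (hP i).2.2
  have key : ∀ i : Fin k, ∃ d0 : Fin (k - 1), (Sum.inr (Sum.inl d0) : Vt M k) ∈ P i := by
    intro i
    obtain ⟨u, r, h1, h2, h3, h4, h5⟩ := crossing (Gr M k)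
      (fun v => ∃ z : Blk M, v = Sum.inr (Sum.inr z)) (P i) (hP i).1.2.2
      _ _ (hP i).2.1 (hP i).2.2 (by simp) ⟨_, rfl⟩
    obtain ⟨zr, rfl⟩ := h3
    rcases u with cu | du | bu
    · -- the crossing edge comes from C: it must be x_i → y_j, contradiction
      have hedge := (gr_CB cu zr).mp h1
      obtain ⟨hcu, hzr, hneq⟩ := hedge
      have hcu_eq : (Sum.inl cu : Vt M k) = Sum.inl (((⟨cu.val, hcu⟩ : Fin k).val : ℕ) : Blk M) := by
        simp only []
        congr 1
        exact (ZMod.natCast_rightInverse cu).symm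
      have hx2 : (Sum.inl cu : Vt M k) ∈ P ⟨cu.val, hcu⟩ := by
        rw [hcu_eq]; exact hxmem _
      have hiu : i = ⟨cu.val, hcu⟩ := by
        by_contra hne2
        exact hdisj _ _ (fun h => hne2 h.symm) _ hx2 h4
      have hir : i = ⟨zr.val, hzr⟩ := by
        have hzr_eq : (Sum.inr (Sum.inr zr) : Vt M k) =
            Sum.inr (Sum.inr (((⟨zr.val, hzr⟩ : Fin k).val : ℕ) : Blk M)) := by
          simp only []
          congr 2
          exact (ZMod.natCast_rightInverse zr).symm
        have hy2 : (Sum.inr (Sum.inr zr) : Vt M k) ∈ P ⟨zr.val, hzr⟩ := by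
          rw [hzr_eq]; exact hymem _
        by_contra hne2
        exact hdisj _ _ (fun h => hne2 h.symm) _ hy2 h5
      rw [hiu] at hir
      exact absurd (congrArg Fin.val hir) hneq
    · exact ⟨du, h4⟩
    · exact absurd ⟨bu, rfl⟩ h2
  choose f hf using key
  have hfinj : Function.Injective f := by
    intro i j hij
    by_contra hne2
    exact hdisj i j hne2 _ (hf i) (hij ▸ hf j)
  have := Fintype.card_le_of_injective f hfinj
  rw [Fintype.card_fin, Fintype.card_fin] at this
  omega
end GS

/-- For every `k ≥ 2` and `d ≥ 1` there exist tournaments on arbitrarily many vertices that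
are strongly `(2k-1)`-connected and have minimum out-degree and minimum in-degree at least
`d`, but are not `k`-linked. -/
theorem exists_highly_connected_not_linked (k d : ℕ) (hk : 2 ≤ k) (hd : 0 < d) (N : ℕ) :
    ∃ n : ℕ, N ≤ n ∧ ∃ G : Fin n → Fin n → Prop,
      IsTournament G ∧ StronglyKConnected G (2 * k - 1) ∧
      (∀ v, d ≤ outDeg G v) ∧ (∀ v, d ≤ inDeg G v) ∧ ¬ KLinked G k := by
  classical
  set M := max (max (2 * k) d) N with hMdef
  have hkM : 2 * k ≤ M := le_max_of_le_left (le_max_left _ _)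
  have hdM : d ≤ M := le_max_of_le_left (le_max_right _ _)
  have hNM : N ≤ M := le_max_right _ _
  set n := Fintype.card (GS.Vt M k) with hn
  have hcardV : n = (2 * M + 1) + ((k - 1) + (2 * M + 1)) := by
    rw [hn]
    simp [GS.Vt, GS.Blk, GS.mm, Fintype.card_sum, ZMod.card]
  refine ⟨n, by omega, ?_⟩
  let e : GS.Vt M k ≃ Fin n := Fintype.equivFin _
  refine ⟨fun a b => GS.Gr M k (e.symm a) (e.symm b), ?_, ?_, ?_, ?_, ?_⟩
  · -- tournament
    obtain ⟨h1, h2⟩ := GS.tournament_Gr (M := M) (k := k)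
    exact ⟨fun v => h1 _, fun x y hxy =>
      h2 _ _ (fun h => hxy (by simpa using congrArg e h))⟩
  · -- connectivity
    constructor
    · rw [Fintype.card_fin]; omega
    · intro S hSc x y hx hy hxy
      set S₀ : Set (GS.Vt M k) := e.symm '' S with hS₀
      have hS₀c : S₀.ncard ≤ 2 * k - 2 := by
        rw [hS₀, Set.ncard_image_of_injective _ e.symm.injective]
        omega
      have hx₀ : e.symm x ∉ S₀ := by
        rintro ⟨s, hs, heq⟩
        exact hx (e.symm.injective heq ▸ hs)
      have hy₀ : e.symm y ∉ S₀ := by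
        rintro ⟨s, hs, heq⟩
        exact hy (e.symm.injective heq ▸ hs)
      have hxy₀ : e.symm x ≠ e.symm y := fun h => hxy (by simpa using congrArg e h)
      obtain ⟨p, ⟨hp0, hp1, hp2⟩, hp3, hp4, hp5⟩ :=
        GS.conn hk hkM S₀ hS₀c (e.symm x) (e.symm y) hx₀ hy₀ hxy₀
      refine ⟨p.map e, ⟨by simpa using hp0, hp1.map e.injective, ?_⟩, ?_, ?_, ?_⟩
      · exact (List.isChain_map e).mpr (hp2.imp (fun a b h => by simpa using h))
      · rw [List.head?_map, hp3]; simp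
      · rw [List.getLast?_map, hp4]; simp
      · intro v hv
        obtain ⟨w, hw, rfl⟩ := List.mem_map.mp hv
        intro hmem
        exact hp5 w hw ⟨e w, hmem, by simp⟩
  · -- out-degrees
    intro v
    have heq : {u | GS.Gr M k (e.symm v) (e.symm u)} = e '' {w | GS.Gr M k (e.symm v) w} := by
      rw [Equiv.image_eq_preimage_symm]
      rfl
    show d ≤ ({u | GS.Gr M k (e.symm v) (e.symm u)}).ncard
    rw [heq, Set.ncard_image_of_injective _ e.injective]
    exact GS.outDeg_ge hk hkM hdM (e.symm v)
  · -- in-degrees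
    intro v
    have heq : {u | GS.Gr M k (e.symm u) (e.symm v)} = e '' {w | GS.Gr M k w (e.symm v)} := by
      rw [Equiv.image_eq_preimage_symm]
      rfl
    show d ≤ ({u | GS.Gr M k (e.symm u) (e.symm v)}).ncard
    rw [heq, Set.ncard_image_of_injective _ e.injective]
    exact GS.inDeg_ge hk hkM hdM (e.symm v)
  · -- not k-linked
    rintro ⟨-, hlink⟩
    have hcast : ∀ i : Fin k, ((i.val : ℕ) : GS.Blk M).val = i.val := by
      intro i
      exact GS.val_natCast (by have := i.isLt; simp only [GS.mm]; omega)
    set x₀ : Fin k → GS.Vt M k := fun i => Sum.inl ((i.val : ℕ) : GS.Blk M) with hx₀def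
    set y₀ : Fin k → GS.Vt M k := fun i => Sum.inr (Sum.inr ((i.val : ℕ) : GS.Blk M)) with hy₀def
    have hinj : Function.Injective (Sum.elim (fun i => e (x₀ i)) (fun i => e (y₀ i)) :
        Fin k ⊕ Fin k → Fin n) := by
      rintro (i | i) (j | j) h <;> simp only [Sum.elim_inl, Sum.elim_inr] at h <;>
        have h2 := e.injective h
      · have h3 : ((i.val : ℕ) : GS.Blk M) = ((j.val : ℕ) : GS.Blk M) := by
          rw [hx₀def] at h2; exact Sum.inl.inj h2
        have := congrArg ZMod.val h3
        rw [hcast i, hcast j] at this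
        exact congrArg Sum.inl (Fin.ext this)
      · rw [hx₀def, hy₀def] at h2; exact absurd h2 (by simp)
      · rw [hx₀def, hy₀def] at h2; exact absurd h2 (by simp)
      · have h3 : ((i.val : ℕ) : GS.Blk M) = ((j.val : ℕ) : GS.Blk M) := by
          rw [hy₀def] at h2
          exact Sum.inr.inj (Sum.inr.inj h2)
        have := congrArg ZMod.val h3
        rw [hcast i, hcast j] at this
        exact congrArg Sum.inr (Fin.ext this)
    obtain ⟨P, hP, hdisj⟩ := hlink (fun i => e (x₀ i)) (fun i => e (y₀ i)) hinj
    refine GS.unlinked hk hkM ⟨fun i => (P i).map e.symm, ?_, ?_⟩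
    · intro i
      obtain ⟨⟨hp0, hp1, hp2⟩, hp3, hp4⟩ := hP i
      refine ⟨⟨by simpa using hp0, hp1.map e.symm.injective, ?_⟩, ?_, ?_⟩
      · exact (List.isChain_map e.symm).mpr (hp2.imp (fun a b h => h))
      · rw [List.head?_map, hp3]
        simp [hx₀def]
    
      · rw [List.getLast?_map, hp4]
        simp [hy₀def]
    · intro i j hij v hvi hvj
      obtain ⟨w, hw, rfl⟩ := List.mem_map.mp hvi
      obtain ⟨w', hw', heq⟩ := List.mem_map.mp hvj
      rw [e.symm.injective heq] at hw'
      exact hdisj i j hij w hw hw'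
end

section
/- For every integer k ≥ 3, there exist tournaments on arbitrarily many vertices that are strongly (5k−1)-connected but are not 2k-linked. -/
/-!
Take three transitive tournaments `T₀ → T₁ → T₂ → T₀` of size `f`, a transitive tournament `Z`
on `2k - 1` vertices, and terminal classes `A, B, C, E` of size `k`, paired as `(aₘ, cₘ)` and
`(bₘ, eₘ)`. Every out-neighbour of `aₘ` and every in-neighbour of `eₘ` lies in `Z` or is a
terminal of another pair, so `2k` disjoint linking paths would need `2k` distinct vertices of `Z`.

Delete a set `S` of at most `5k - 2` vertices. As `f > |S|`, each `Tₚ` keeps a vertex, and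
these lie on a directed triangle. Every surviving vertex except the `aₘ` reaches this triangle in
one step, and the triangle reaches every vertex except the `eₘ` in one step. The vertex `aₘ`
reaches `T₁` through each of the `5k - 2` vertices of `Z ∪ B ∪ (C - cₘ) ∪ E`; if they are all
deleted, `S` is exactly this set and `aₘ → aₘ' → cₘ → T₁` survives, where `aₘ'` exists because
`A` (like `E`) carries a tournament without source or sink, which needs `k ≥ 3`. Dually for `eₘ`.
-/

open Function Relation

section Lists

variable {α : Type*} {r : α → α → Prop}

theorem Relation.ReflTransGen.exists_nodup_isChain {a b : α} (h : ReflTransGen r a b) :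
    ∃ l : List α, l.Nodup ∧ l.IsChain r ∧ l.head? = some a ∧ l.getLast? = some b ∧
      ∀ v ∈ l, ReflTransGen r a v := by
  induction h using Relation.ReflTransGen.head_induction_on with
  | refl => exact ⟨[b], by simp, .singleton b, rfl, rfl, by simp [ReflTransGen.refl]⟩
  | @head a c hac _ ih =>
    obtain ⟨l, hnd, hch, hh, hl, hreach⟩ := ih
    by_cases ha : a ∈ l
    · obtain ⟨s, t, rfl⟩ := List.append_of_mem ha
      refine ⟨a :: t, (List.nodup_append.mp hnd).2.1, (List.isChain_append.mp hch).2.1, rfl,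
        by rwa [List.getLast?_append_of_ne_nil _ (List.cons_ne_nil _ _)] at hl, fun v hv => ?_⟩
      exact .head hac (hreach v (List.mem_append_right _ hv))
    · refine ⟨a :: l, List.nodup_cons.mpr ⟨ha, hnd⟩, List.isChain_cons.mpr ⟨?_, hch⟩, rfl, ?_, ?_⟩
      · simp [hh, hac]
      · cases l <;> simp_all [List.getLast?_cons]
      · simp only [List.mem_cons, forall_eq_or_imp]
        exact ⟨.refl, fun v hv => .head hac (hreach v hv)⟩

theorem List.IsChain.exists_rel_head {l : List α} (hc : l.IsChain r) {u w : α}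
    (hu : l.head? = some u) (hw : l.getLast? = some w) (huw : u ≠ w) : ∃ v ∈ l, r u v := by
  rcases l with _ | ⟨x, _ | ⟨y, t⟩⟩
  · simp at hu
  · simp_all
  · simp only [List.head?_cons, Option.some.injEq] at hu
    exact ⟨y, by simp, hu ▸ (List.isChain_cons_cons.mp hc).1⟩

theorem List.IsChain.exists_rel_getLast {l : List α} (hc : l.IsChain r) {u w : α}
    (hu : l.head? = some u) (hw : l.getLast? = some w) (huw : u ≠ w) : ∃ v ∈ l, r v w := by
  simpa using (List.isChain_reverse.mpr hc).exists_rel_head (by simpa using hw)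
    (by simpa using hu) huw.symm

end Lists

section Cardinality

variable {ι α : Type*}

theorem Set.card_le_ncard_of_injective [Finite α] {S : Set α} {g : ι → α} (hg : Injective g)
    (hgS : ∀ i, g i ∈ S) : Nat.card ι ≤ S.ncard := by
  rw [← Set.ncard_range_of_injective hg]
  exact Set.ncard_le_ncard (Set.range_subset_iff.mpr hgS)

theorem Set.exists_mem_notMem_or_eq_of_ncard_le [Finite α] {S D : Set α} (h : S.ncard ≤ D.ncard) :
    (∃ v ∈ D, v ∉ S) ∨ S = D := by
  by_cases hDS : D ⊆ S
  · exact .inr (Set.eq_of_subset_of_ncard_le hDS h).symm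
  · exact .inl (Set.not_subset.mp hDS)

theorem Set.ncard_range_sdiff_singleton {g : ι → α} (hg : Injective g) (i : ι) :
    (Set.range g \ {g i}).ncard = Nat.card ι - 1 := by
  rw [Set.ncard_sdiff_singleton_of_mem (Set.mem_range_self i), Set.ncard_range_of_injective hg]

end Cardinality

section Digraphs

variable {V W : Type} {G : V → V → Prop}

theorem IsDipath.map {H : W → W → Prop} {g : V → W} (hg : Injective g)
    (hGH : ∀ u v, G u v → H (g u) (g v)) {p : List V} (hp : IsDipath G p) :
    IsDipath H (p.map g) :=
  ⟨by simpa using hp.1, hp.2.1.map hg, (List.isChain_map g).mpr (hp.2.2.imp fun u v => hGH u v)⟩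

theorem IsTournament.comap (hG : IsTournament G) {g : W → V} (hg : Injective g) :
    IsTournament (fun u v => G (g u) (g v)) :=
  ⟨fun v => hG.1 (g v), fun x y hxy => hG.2 (g x) (g y) (hg.ne hxy)⟩

variable [Fintype V] [Fintype W]

theorem StronglyKConnected.comap {k : ℕ} (hG : StronglyKConnected G k) (e : W ≃ V) :
    StronglyKConnected (fun u v => G (e u) (e v)) k := by
  refine ⟨by simpa [Fintype.card_congr e] using hG.1, fun S hS x y hx hy hxy => ?_⟩
  obtain ⟨p, hp, hpx, hpy, hpS⟩ :=
    hG.2 (e '' S) (by rwa [Set.ncard_image_of_injective _ e.injective]) (e x) (e y)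
      (by simpa using hx) (by simpa using hy) (e.injective.ne hxy)
  refine ⟨p.map e.symm, hp.map e.symm.injective (by simp), by simp [hpx], by simp [hpy], ?_⟩
  simp only [List.mem_map]
  rintro _ ⟨v, hv, rfl⟩ hvS
  exact hpS v hv ⟨_, hvS, by simp⟩

theorem KLinked.of_comap {k : ℕ} (e : W ≃ V) (h : KLinked (fun u v => G (e u) (e v)) k) :
    KLinked G k := by
  refine ⟨by simpa [Fintype.card_congr e] using h.1, fun x y hxy => ?_⟩
  obtain ⟨P, hP, hdisj⟩ := h.2 (e.symm ∘ x) (e.symm ∘ y) (by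
    rw [← Sum.comp_elim]; exact e.symm.injective.comp hxy)
  refine ⟨fun i => (P i).map e, fun i => ⟨(hP i).1.map e.injective (fun _ _ h => h),
    by simp [(hP i).2.1], by simp [(hP i).2.2]⟩, fun i j hij v hvi hvj => ?_⟩
  simp only [List.mem_map] at hvi hvj
  obtain ⟨u, hu, rfl⟩ := hvi
  obtain ⟨u', hu', huu'⟩ := hvj
  exact hdisj i j hij u hu (e.injective huu' ▸ hu')

theorem stronglyKConnected_of_reflTransGen {k : ℕ} (hcard : k + 1 ≤ Fintype.card V)
    (h : ∀ S : Set V, S.ncard ≤ k - 1 → ∀ x y, x ∉ S → y ∉ S →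
      ReflTransGen (fun u v => G u v ∧ v ∉ S) x y) :
    StronglyKConnected G k := by
  refine ⟨hcard, fun S hS x y hx hy _ => ?_⟩
  obtain ⟨p, hnd, hch, hpx, hpy, hreach⟩ := (h S hS x y hx hy).exists_nodup_isChain
  refine ⟨p, ⟨by rintro rfl; simp at hpx, hnd, hch.imp fun _ _ h => h.1⟩, hpx, hpy, fun v hv => ?_⟩
  rcases (hreach v hv).cases_tail with rfl | ⟨_, _, _, hvS⟩
  exacts [hx, hvS]

theorem KLinked.exists_disjoint_dipaths {ι : Type} [Fintype ι] (hG : KLinked G (Fintype.card ι))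
    (x y : ι → V) (hxy : Injective (Sum.elim x y)) :
    ∃ P : ι → List V,
      (∀ i, IsDipath G (P i) ∧ (P i).head? = some (x i) ∧ (P i).getLast? = some (y i)) ∧
      ∀ i j, i ≠ j → ∀ v ∈ P i, v ∉ P j := by
  let e := Fintype.equivFin ι
  obtain ⟨P, hP, hdisj⟩ := hG.2 (x ∘ e.symm) (y ∘ e.symm) (by
    rw [← Sum.elim_comp_map]
    exact hxy.comp (Sum.map_injective.mpr ⟨e.symm.injective, e.symm.injective⟩))
  exact ⟨P ∘ e, fun i => by simpa using hP (e i), fun i j hij => hdisj _ _ (e.injective.ne hij)⟩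

theorem not_kLinked_of_forced_through {ι : Type} [Fintype ι] (x y : ι → V)
    (hxy : Injective (Sum.elim x y)) (Z : Set V) (hZ : Z.ncard < Fintype.card ι)
    (hforced : ∀ i,
      (∀ v, G (x i) v → v ∈ Z ∨ ∃ j ≠ i, v = x j ∨ v = y j) ∨
      (∀ v, G v (y i) → v ∈ Z ∨ ∃ j ≠ i, v = x j ∨ v = y j)) :
    ¬ KLinked G (Fintype.card ι) := by
  intro hG
  obtain ⟨P, hP, hdisj⟩ := hG.exists_disjoint_dipaths x y hxy
  have hx (j) : x j ∈ P j := List.mem_of_mem_head? (hP j).2.1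
  have hy (j) : y j ∈ P j := List.mem_of_mem_getLast? (hP j).2.2
  have hZP : ∀ i, ∃ z ∈ Z, z ∈ P i := by
    intro i
    have hne : x i ≠ y i := hxy.ne (a₁ := .inl i) (a₂ := .inr i) Sum.inl_ne_inr
    obtain ⟨-, -, hch⟩ := (hP i).1
    have hmem : ∀ v ∈ P i, (v ∈ Z ∨ ∃ j ≠ i, v = x j ∨ v = y j) → ∃ z ∈ Z, z ∈ P i := by
      rintro v hv (hvZ | ⟨j, hji, rfl | rfl⟩)
      exacts [⟨v, hvZ, hv⟩, (hdisj i j hji.symm _ hv (hx j)).elim,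
        (hdisj i j hji.symm _ hv (hy j)).elim]
    rcases hforced i with hout | hin
    · obtain ⟨v, hv, hxv⟩ := hch.exists_rel_head (hP i).2.1 (hP i).2.2 hne
      exact hmem v hv (hout v hxv)
    · obtain ⟨v, hv, hvy⟩ := hch.exists_rel_getLast (hP i).2.1 (hP i).2.2 hne
      exact hmem v hv (hin v hvy)
  choose z hzZ hzP using hZP
  have hz : Injective z := fun i j hij =>
    by_contra fun hne => hdisj i j hne _ (hzP i) (hij ▸ hzP j)
  have := Set.card_le_ncard_of_injective hz hzZ
  rw [Nat.card_eq_fintype_card] at this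
  omega

end Digraphs

namespace NonLinkedTournament

def ltFlipEnds (k : ℕ) (i j : Fin k) : Prop :=
  (i < j ∧ ¬(i.val = 0 ∧ j.val = k - 1)) ∨ (i.val = k - 1 ∧ j.val = 0)

variable {k f : ℕ}

theorem ltFlipEnds_irrefl (hk : 2 ≤ k) (i : Fin k) : ¬ ltFlipEnds k i i := by
  simp only [ltFlipEnds]; omega

theorem ltFlipEnds_iff_not (hk : 2 ≤ k) {i j : Fin k} (hij : i ≠ j) :
    ltFlipEnds k i j ↔ ¬ ltFlipEnds k j i := by
  have := Fin.val_ne_of_ne hij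
  simp only [ltFlipEnds, Fin.lt_def]; omega

theorem exists_ltFlipEnds_left (hk : 3 ≤ k) (i : Fin k) : ∃ j, ltFlipEnds k j i := by
  by_cases hi : i.val = 0
  · exact ⟨⟨k - 1, by omega⟩, .inr ⟨rfl, hi⟩⟩
  · exact ⟨⟨i.val - 1, by omega⟩, .inl ⟨Fin.lt_def.mpr (by simp; omega), by simp; omega⟩⟩

theorem exists_ltFlipEnds_right (hk : 3 ≤ k) (i : Fin k) : ∃ j, ltFlipEnds k i j := by
  by_cases hi : i.val = k - 1
  · exact ⟨⟨0, by omega⟩, .inr ⟨hi, rfl⟩⟩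
  · exact ⟨⟨i.val + 1, by omega⟩, .inl ⟨Fin.lt_def.mpr (by simp), by simp; omega⟩⟩

inductive Vertex (k f : ℕ) : Type
  | t (p : Fin 3) (i : Fin f)
  | z (i : Fin (2 * k - 1))
  | a (i : Fin k)
  | b (i : Fin k)
  | c (i : Fin k)
  | e (i : Fin k)

def Vertex.equivSum :
    Vertex k f ≃ (Fin 3 × Fin f) ⊕ Fin (2 * k - 1) ⊕ Fin k ⊕ Fin k ⊕ Fin k ⊕ Fin k where
  toFun
    | .t p i => .inl (p, i)
    | .z i => .inr (.inl i)
    | .a i => .inr (.inr (.inl i))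
    | .b i => .inr (.inr (.inr (.inl i)))
    | .c i => .inr (.inr (.inr (.inr (.inl i))))
    | .e i => .inr (.inr (.inr (.inr (.inr i))))
  invFun
    | .inl (p, i) => .t p i
    | .inr (.inl i) => .z i
    | .inr (.inr (.inl i)) => .a i
    | .inr (.inr (.inr (.inl i))) => .b i
    | .inr (.inr (.inr (.inr (.inl i)))) => .c i
    | .inr (.inr (.inr (.inr (.inr i)))) => .e i
  left_inv v := by cases v <;> rfl
  right_inv s := by rcases s with ⟨p, i⟩ | i | i | i | i | i <;> rfl

instance : Fintype (Vertex k f) := Fintype.ofEquiv _ Vertex.equivSum.symm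

theorem card_vertex : Fintype.card (Vertex k f) = 3 * f + (2 * k - 1) + 4 * k := by
  rw [Fintype.card_congr Vertex.equivSum]
  simp only [Fintype.card_sum, Fintype.card_prod, Fintype.card_fin]
  ring

def adj (k f : ℕ) : Vertex k f → Vertex k f → Prop
  | .t p i, .t p' j => if p = p' then i < j else p' = p + 1
  | .t p _, .z _ | .t p _, .b _ | .t p _, .c _ => p ≠ 1
  | .z _, .t p _ | .b _, .t p _ | .c _, .t p _ => p = 1
  | .t _ _, .a _ | .e _, .t _ _ => True
  | .z i, .z j | .b i, .b j | .c i, .c j => i < j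
  | .a i, .a j | .e i, .e j => ltFlipEnds k i j
  | .a i, .c j | .b i, .e j => i ≠ j
  | .c i, .a j | .e i, .b j => i = j
  | .a _, .z _ | .b _, .z _ | .z _, .c _ | .z _, .e _ => True
  | .a _, .b _ | .a _, .e _ | .b _, .c _ | .c _, .e _ => True
  | _, _ => False

theorem isTournament_adj (hk : 2 ≤ k) : IsTournament (adj k f) := by
  refine ⟨?_, ?_⟩
  · rintro (_ | _ | _ | _ | _ | _) <;> simp [adj, ltFlipEnds_irrefl hk]
  · rintro (⟨p, i⟩ | i | i | i | i | i) (⟨p', j⟩ | j | j | j | j | j) hne <;>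
      simp only [adj, ne_eq, Vertex.t.injEq, Vertex.z.injEq, Vertex.a.injEq, Vertex.b.injEq,
        Vertex.c.injEq, Vertex.e.injEq, not_and, reduceCtorEq, not_false_eq_true] at hne ⊢
    case t.t =>
      rcases eq_or_ne p p' with rfl | hp
      · simp only [if_true]; omega
      · simp only [hp, hp.symm, if_false]; clear hne; revert p p'; decide
    all_goals first | tauto | omega | exact ltFlipEnds_iff_not hk hne

theorem not_kLinked_adj (hk : 2 ≤ k) : ¬ KLinked (adj k f) (2 * k) := by
  have hcard : Fintype.card (Fin k ⊕ Fin k) = 2 * k := by simp [two_mul]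
  rw [← hcard]
  refine not_kLinked_of_forced_through (Sum.elim .a .b) (Sum.elim .c .e) ?_ (Set.range .z) ?_ ?_
  · rintro ((_ | _) | (_ | _)) ((_ | _) | (_ | _)) <;> simp
  · rw [Set.ncard_range_of_injective (fun _ _ h => Vertex.z.inj h), hcard]
    simp only [Nat.card_eq_fintype_card, Fintype.card_fin]; omega
  · rintro (m | m) <;> [left; right] <;>
      rintro (⟨p, i⟩ | i | i | i | i | i) h <;> simp [adj] at h ⊢ <;> rintro rfl <;>
      first | exact h rfl | exact ltFlipEnds_irrefl hk _ h

theorem adj_t_succ (p : Fin 3) (i j : Fin f) : adj k f (.t p i) (.t (p + 1) j) := by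
  simp only [adj, if_neg (show p ≠ p + 1 by revert p; decide)]

section Connectivity

variable {S : Set (Vertex k f)}

theorem exists_t_notMem (hS : S.ncard < f) (p : Fin 3) : ∃ i, Vertex.t p i ∉ S := by
  by_contra! h
  have := Set.card_le_ncard_of_injective (fun _ _ hij => (Vertex.t.inj hij).2) h
  simp only [Nat.card_eq_fintype_card, Fintype.card_fin] at this; omega

variable {τ : Fin 3 → Fin f}

theorem reflTransGen_t_t (hτ : ∀ p, Vertex.t p (τ p) ∉ S) (p q : Fin 3) :
    ReflTransGen (fun u v => adj k f u v ∧ v ∉ S) (.t p (τ p)) (.t q (τ q)) := by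
  have hstep (p : Fin 3) : ReflTransGen (fun u v => adj k f u v ∧ v ∉ S)
      (.t p (τ p)) (.t (p + 1) (τ (p + 1))) := .single ⟨adj_t_succ _ _ _, hτ _⟩
  have : q = p ∨ q = p + 1 ∨ q = p + 1 + 1 := by revert p q; decide
  rcases this with rfl | rfl | rfl
  exacts [.refl, hstep p, (hstep p).trans (hstep (p + 1))]

theorem reflTransGen_to_t_one (hk : 3 ≤ k) (hS : S.ncard ≤ 5 * k - 2)
    (hτ : ∀ p, Vertex.t p (τ p) ∉ S) :
    ∀ v ∉ S, ReflTransGen (fun u v => adj k f u v ∧ v ∉ S) v (.t 1 (τ 1))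
  | .t p i, _ =>
    .head ⟨adj_t_succ p i (τ (p + 1)), hτ _⟩ (reflTransGen_t_t hτ _ _)
  | .z _, _ | .b _, _ | .c _, _ | .e _, _ => .single ⟨by simp [adj], hτ 1⟩
  | .a m, _ => by
    let g : Fin (2 * k - 1) ⊕ Fin k ⊕ Fin k ⊕ Fin k → Vertex k f :=
      Sum.elim .z (Sum.elim .b (Sum.elim .c .e))
    have hg : Injective g := by rintro (_ | _ | _ | _) (_ | _ | _ | _) <;> simp [g]
    have hD : (Set.range g \ {g (.inr (.inr (.inl m)))}).ncard = 5 * k - 2 := by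
      rw [Set.ncard_range_sdiff_singleton hg]
      simp only [Nat.card_eq_fintype_card, Fintype.card_sum, Fintype.card_fin]
      omega
    rcases Set.exists_mem_notMem_or_eq_of_ncard_le (hS.trans hD.ge) with
      ⟨_, ⟨⟨s, rfl⟩, hs⟩, hsS⟩ | rfl
    · refine .head ⟨?_, hsS⟩ (.single ⟨?_, hτ 1⟩) <;> rcases s with _ | _ | _ | _ <;>
        simp_all [g, adj, eq_comm]
    · obtain ⟨m', hm'⟩ := exists_ltFlipEnds_right hk m
      have hmm' : m ≠ m' := by rintro rfl; exact ltFlipEnds_irrefl (by omega) m hm'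
      have h₁ : adj k f (.a m) (.a m') := hm'
      have h₂ : adj k f (.a m') (.c m) := hmm'.symm
      exact .head ⟨h₁, by simp [g]⟩ (.head ⟨h₂, by simp [g]⟩ (.single ⟨by simp [adj], hτ 1⟩))

theorem reflTransGen_from_t_zero (hk : 3 ≤ k) (hS : S.ncard ≤ 5 * k - 2)
    (hτ : ∀ p, Vertex.t p (τ p) ∉ S) :
    ∀ v ∉ S, ReflTransGen (fun u v => adj k f u v ∧ v ∉ S) (.t 0 (τ 0)) v
  | .t p i, hv =>
    (reflTransGen_t_t hτ _ _).tail ⟨by simpa using adj_t_succ (p - 1) (τ (p - 1)) i, hv⟩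
  | .z _, hv | .a _, hv | .b _, hv | .c _, hv => .single ⟨by simp [adj], hv⟩
  | .e m, hv => by
    let g : Fin (2 * k - 1) ⊕ Fin k ⊕ Fin k ⊕ Fin k → Vertex k f :=
      Sum.elim .z (Sum.elim .a (Sum.elim .b .c))
    have hg : Injective g := by rintro (_ | _ | _ | _) (_ | _ | _ | _) <;> simp [g]
    have hD : (Set.range g \ {g (.inr (.inr (.inl m)))}).ncard = 5 * k - 2 := by
      rw [Set.ncard_range_sdiff_singleton hg]
      simp only [Nat.card_eq_fintype_card, Fintype.card_sum, Fintype.card_fin]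
      omega
    rcases Set.exists_mem_notMem_or_eq_of_ncard_le (hS.trans hD.ge) with
      ⟨_, ⟨⟨s, rfl⟩, hs⟩, hsS⟩ | rfl
    · refine .head ⟨?_, hsS⟩ (.single ⟨?_, hv⟩) <;> rcases s with _ | _ | _ | _ <;>
        simp_all [g, adj, eq_comm]
    · obtain ⟨m', hm'⟩ := exists_ltFlipEnds_left hk m
      have hmm' : m ≠ m' := by rintro rfl; exact ltFlipEnds_irrefl (by omega) m hm'
      have h₁ : adj k f (.t 0 (τ 0)) (.b m) := by simp [adj]
      have h₂ : adj k f (.b m) (.e m') := hmm'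
      have h₃ : adj k f (.e m') (.e m) := hm'
      exact .head ⟨h₁, by simp [g]⟩ (.head ⟨h₂, by simp [g]⟩ (.single ⟨h₃, hv⟩))

end Connectivity

theorem stronglyKConnected_adj (hk : 3 ≤ k) (hf : 5 * k - 1 ≤ f) :
    StronglyKConnected (adj k f) (5 * k - 1) := by
  refine stronglyKConnected_of_reflTransGen (by rw [card_vertex]; omega)
    fun S hS x y hx hy => ?_
  choose τ hτ using exists_t_notMem (S := S) (by omega)
  exact (reflTransGen_to_t_one hk hS hτ x hx).trans
    ((reflTransGen_t_t hτ 1 0).trans (reflTransGen_from_t_zero hk hS hτ y hy))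

end NonLinkedTournament

open NonLinkedTournament in
/-- For every `k ≥ 3` there exist tournaments on arbitrarily many vertices that are strongly
`(5k-1)`-connected but are not `2k`-linked. -/
theorem exists_five_k_connected_not_two_k_linked (k : ℕ) (hk : 3 ≤ k) (N : ℕ) :
    ∃ n : ℕ, N ≤ n ∧ ∃ G : Fin n → Fin n → Prop,
      IsTournament G ∧ StronglyKConnected G (5 * k - 1) ∧ ¬ KLinked G (2 * k) := by
  let f := N + 5 * k
  let e := (Fintype.equivFin (Vertex k f)).symm
  refine ⟨Fintype.card (Vertex k f), by rw [card_vertex]; omega,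
    fun u v => adj k f (e u) (e v), ?_, ?_, ?_⟩
  · exact (isTournament_adj (by omega)).comap e.injective
  · exact (stronglyKConnected_adj hk (by omega)).comap e
  · exact fun h => not_kLinked_adj (by omega) (h.of_comap e)
end
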